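/- arXiv:2407.01686 — 4 statements merged into one kernel-verified Lean document; each statement's English description precedes it below -/
import Mathlib

section
/- Exogenizing a latent node commutes with node splitting: for a pDAG G and an endogenous latent node u of G, split(exog(G,u)) = exog(split(G),u), where exog(·,u) adds an edge from every parent of u to every child of u and then deletes all edges into u. -/
/-- Nodes of a pDAG with visible nodes `V` and latent nodes `L` are `V ⊕ L`.
Under node splitting, a node in its role as a *source* of an edge is mapped to its
sharp copy (if visible), and latent nodes are unchanged. -/
def SplitSrc {V L : Type*} : V ⊕ L → (V × Bool) ⊕ L :=
  Sum.elim (fun a => Sum.inl (a, true)) Sum.inr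

/-- A node in its role as a *target* of an edge is mapped to its flat copy
(if visible), and latent nodes are unchanged. -/
def SplitTgt {V L : Type*} : V ⊕ L → (V × Bool) ⊕ L :=
  Sum.elim (fun a => Sum.inl (a, false)) Sum.inr

/-- The split of a pDAG: every edge `x → y` becomes an edge from the source copy of
`x` to the target copy of `y`; thus each visible node `a` is replaced by a childless
node `a♭` inheriting `a`'s incoming edges and a parentless node `a♯` inheriting
`a`'s outgoing edges, while latent nodes are not split. -/
def SplitRel {V L : Type*} (E : V ⊕ L → V ⊕ L → Prop) :
    (V × Bool) ⊕ L → (V × Bool) ⊕ L → Prop :=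
  fun x y => ∃ a b, E a b ∧ x = SplitSrc a ∧ y = SplitTgt b

/-- Exogenization of a node `u`: add an edge from every parent of `u` to every child
of `u`, then delete all edges into `u`. -/
def Exog {N : Type*} (E : N → N → Prop) (u : N) : N → N → Prop :=
  fun x y => (E x y ∧ y ≠ u) ∨ (E x u ∧ E u y)

/-!
Splitting is the image of the edge relation under the pair of node maps `(SplitSrc, SplitTgt)`,
and both maps have the latent node `u` as the only preimage of `u`. Exogenizing `u` only
inspects whether an endpoint equals `u`, so it commutes with taking the image under any pair
of maps with this property.
-/

def RelImage {α β : Type*} (f g : α → β) (E : α → α → Prop) : β → β → Prop :=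
  fun x y => ∃ a b, E a b ∧ x = f a ∧ y = g b

theorem relImage_exog {α β : Type*} (E : α → α → Prop) {f g : α → β} {u : α} {w : β}
    (hf : ∀ a, f a = w ↔ a = u) (hg : ∀ b, g b = w ↔ b = u) (x y : β) :
    RelImage f g (Exog E u) x y ↔ Exog (RelImage f g E) w x y := by
  constructor
  · rintro ⟨a, b, ⟨hab, hbu⟩ | ⟨hau, hub⟩, rfl, rfl⟩
    · exact .inl ⟨⟨a, b, hab, rfl, rfl⟩, fun h => hbu ((hg b).1 h)⟩
    · exact .inr ⟨⟨a, u, hau, rfl, ((hg u).2 rfl).symm⟩, ⟨u, b, hub, ((hf u).2 rfl).symm, rfl⟩⟩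
  · rintro (⟨⟨a, b, hab, rfl, rfl⟩, hbw⟩ | ⟨⟨a, b, hab, rfl, hb⟩, ⟨a', b', hab', ha', rfl⟩⟩)
    · exact ⟨a, b, .inl ⟨hab, fun hbu => hbw ((hg b).2 hbu)⟩, rfl, rfl⟩
    · obtain rfl := (hg b).1 hb.symm
      obtain rfl := (hf a').1 ha'.symm
      exact ⟨a, b', .inr ⟨hab, hab'⟩, rfl, rfl⟩

theorem splitRel_eq_relImage {V L : Type*} (E : V ⊕ L → V ⊕ L → Prop) :
    SplitRel E = RelImage SplitSrc SplitTgt E :=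
  rfl

theorem splitSrc_eq_inr_iff {V L : Type*} (a : V ⊕ L) (u : L) :
    SplitSrc a = Sum.inr u ↔ a = Sum.inr u := by
  cases a <;> simp [SplitSrc]

theorem splitTgt_eq_inr_iff {V L : Type*} (b : V ⊕ L) (u : L) :
    SplitTgt b = Sum.inr u ↔ b = Sum.inr u := by
  cases b <;> simp [SplitTgt]

theorem exog_commutes_with_split_general {V L : Type*} (E : V ⊕ L → V ⊕ L → Prop)
    (u : L) :
    ∀ x y, SplitRel (Exog E (Sum.inr u)) x y ↔ Exog (SplitRel E) (Sum.inr u) x y := by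
  simp only [splitRel_eq_relImage]
  exact relImage_exog E (fun a => splitSrc_eq_inr_iff a u) (fun b => splitTgt_eq_inr_iff b u)

/-- Exogenizing an endogenous latent node commutes with node splitting:
`split (exog (G, u)) = exog (split G, u)`. -/
theorem exog_commutes_with_split {V L : Type*} (E : V ⊕ L → V ⊕ L → Prop)
    (hacyc : ∀ v, ¬ Relation.TransGen E v v)
    (u : L) (hendo : ∃ p, E p (Sum.inr u)) :
    ∀ x y, SplitRel (Exog E (Sum.inr u)) x y ↔ Exog (SplitRel E) (Sum.inr u) x y :=
  exog_commutes_with_split_general E u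
end

section
/- Any two distinct latent-free pDAGs (DAGs) consistent with the same fixed topological (temporal) ordering of their nodes exhibit different sets of d-separation relations; specifically, if G has an edge a⁽ⁱ⁾→a⁽ʲ⁾ (with i<j in the ordering) that G' lacks, then in G' the nodes a⁽ⁱ⁾ and a⁽ʲ⁾ are d-separated by the set {a⁽¹⁾,…,a⁽ʲ⁻¹⁾}\{a⁽ⁱ⁾}, while in G they are not. -/
/-- An undirected path in the directed graph `E`: a duplicate-free list of vertices
in which consecutive vertices are joined by an edge of `E` in one direction or
the other. -/
def IsUndirPath {N : Type*} (E : N → N → Prop) (l : List N) : Prop :=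
  l.Nodup ∧ l.Chain' (fun u v => E u v ∨ E v u)

/-- A path (given as a list of vertices) is blocked by `Z` if it contains an
intermediate vertex `b` (with neighbours `a` and `c` on the path) such that either
`b` is a collider (`a → b ← c`) none of whose descendants (including itself) is in
`Z`, or `b` is a non-collider and `b ∈ Z`. -/
def BlockedPath {N : Type*} (E : N → N → Prop) (Z : Set N) (l : List N) : Prop :=
  ∃ p a b c s, l = p ++ a :: b :: c :: s ∧
    (((E a b ∧ E c b) ∧ ∀ d, Relation.ReflTransGen E b d → d ∉ Z) ∨
      (¬(E a b ∧ E c b) ∧ b ∈ Z))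

/-- `x` and `y` are d-separated given `Z` in `E` if every undirected path between
them is blocked by `Z`. -/
def DSep {N : Type*} (E : N → N → Prop) (x y : N) (Z : Set N) : Prop :=
  ∀ l : List N, IsUndirPath E l → l.head? = some x → l.getLast? = some y →
    BlockedPath E Z l

private lemma rtg_le {n : ℕ} {E : Fin n → Fin n → Prop} (hE : ∀ i j, E i j → i < j)
    {b d : Fin n} (h : Relation.ReflTransGen E b d) : b ≤ d := by
  induction h with
  | refl => exact le_refl _
  | tail _ h ih => exact ih.trans (hE _ _ h).le

private lemma list_decomp {α} (l : List α) (m : ℕ) (h : m + 2 < l.length) :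
    l = l.take m ++ l[m] :: l[m+1] :: l[m+2] :: l.drop (m+3) := by
  conv_lhs => rw [← List.take_append_drop m l]
  rw [List.drop_eq_getElem_cons (by omega), List.drop_eq_getElem_cons (by omega),
    List.drop_eq_getElem_cons (by omega)]

private lemma getElem_congr' {α} (l : List α) {a b : ℕ} (ha : a < l.length)
    (hb : b < l.length) (h : a = b) : l[a]'ha = l[b]'hb := by subst h; rfl

/-- Two distinct latent-free pDAGs (DAGs) consistent with the same temporal ordering
of their nodes exhibit different d-separation relations: if `G` has an edge
`a⁽ⁱ⁾ → a⁽ʲ⁾` (with `i < j`) that `G'` lacks, then in `G'` the nodes `a⁽ⁱ⁾` and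
`a⁽ʲ⁾` are d-separated by `{a⁽¹⁾, …, a⁽ʲ⁻¹⁾} \ {a⁽ⁱ⁾}`, while in `G` they are not. -/
theorem latent_free_dags_dsep_differ {n : ℕ} (E E' : Fin n → Fin n → Prop)
    (hE : ∀ i j, E i j → i < j) (hE' : ∀ i j, E' i j → i < j)
    (i j : Fin n) (hij : i < j) (hedge : E i j) (hnoedge : ¬ E' i j) :
    DSep E' i j {z | z < j ∧ z ≠ i} ∧ ¬ DSep E i j {z | z < j ∧ z ≠ i} := by
  constructor
  · rintro l ⟨hnd, hch⟩ hhead hlast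
    have hlen1 : 0 < l.length := by
      rcases l with - | _ <;> simp_all
    have h0 : l[0] = i := by
      rwa [List.head?_eq_getElem?, List.getElem?_eq_getElem hlen1, Option.some_inj] at hhead
    have hlg : l[l.length - 1]'(by omega) = j := by
      rw [List.getLast?_eq_getElem?] at hlast
      rwa [List.getElem?_eq_getElem (by omega), Option.some_inj] at hlast
    have hchain : ∀ m : ℕ, (hm : m + 1 < l.length) → E' l[m] l[m+1] ∨ E' l[m+1] l[m] :=
      fun m hm => List.isChain_iff_getElem.mp hch m (by omega)
    have hinj : Function.Injective l.get := List.nodup_iff_injective_get.mp hnd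
    -- length at least 3
    have hk3 : 3 ≤ l.length := by
      by_contra hk
      push_neg at hk
      have h12 : l.length = 1 ∨ l.length = 2 := by omega
      rcases h12 with h12 | h12
      · -- length 1 : i = j
        have : l[0] = l[l.length - 1]'(by omega) := getElem_congr' l _ _ (by omega)
        rw [h0, hlg] at this
        exact absurd this (ne_of_lt hij)
      · -- length 2 : edge between i and j
        have he := hchain 0 (by omega)
        have h1 : l[1]'(by omega) = l[l.length - 1]'(by omega) := getElem_congr' l _ _ (by omega)
        rw [hlg] at h1
        rw [h0, h1] at he
        rcases he with h | h
        · exact hnoedge h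
        · exact absurd (hE' _ _ h) (not_lt.mpr hij.le)
    by_cases hbig : ∃ m : ℕ, ∃ hm : m < l.length, j < l[m]
    · -- case A : take the maximum vertex, a collider above j
      obtain ⟨M, -, hM⟩ := Finset.exists_max_image Finset.univ l.get
        ⟨⟨0, hlen1⟩, Finset.mem_univ _⟩
      have hM' : ∀ t : ℕ, (ht : t < l.length) → l[t] ≤ l.get M :=
        fun t ht => hM ⟨t, ht⟩ (Finset.mem_univ _)
      obtain ⟨w, hw, hwj⟩ := hbig
      have hjM : j < l.get M := lt_of_lt_of_le hwj (hM' w hw)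
      -- M is interior
      have hM0 : M.val ≠ 0 := by
        intro h
        have : l.get M = i := by
          rw [show M = (⟨0, hlen1⟩ : Fin l.length) from Fin.ext h, List.get_eq_getElem]
          exact h0
        rw [this] at hjM
        exact absurd (hij.trans hjM) (lt_irrefl _)
      have hMl : M.val ≠ l.length - 1 := by
        intro h
        have : l.get M = j := by
          rw [show M = (⟨l.length - 1, by omega⟩ : Fin l.length) from Fin.ext h,
            List.get_eq_getElem]
          exact hlg
        rw [this] at hjM
        exact lt_irrefl _ hjM
      obtain ⟨m, hm⟩ : ∃ m, M.val = m + 1 := ⟨M.val - 1, by omega⟩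
      have hm2 : m + 2 < l.length := by have := M.isLt; omega
      have hMeq : M = (⟨m+1, Nat.lt_of_succ_lt hm2⟩ : Fin l.length) := Fin.ext hm
      have hMget : l.get M = l[m+1]'(Nat.lt_of_succ_lt hm2) := by rw [hMeq]; exact List.get_eq_getElem
      have hjm : j < l[m+1]'(Nat.lt_of_succ_lt hm2) := hMget ▸ hjM
      have hMa : ∀ t : ℕ, (ht : t < l.length) → l[t] ≤ l[m+1]'(Nat.lt_of_succ_lt hm2) :=
        fun t ht => hMget ▸ hM' t ht
      refine ⟨l.take m, l[m], l[m+1], l[m+2], l.drop (m+3), list_decomp l m hm2,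
        Or.inl ⟨⟨?_, ?_⟩, ?_⟩⟩
      · rcases hchain m (by omega) with h | h
        · exact h
        · exact absurd (lt_of_le_of_lt (hMa m (by omega)) (hE' _ _ h)) (lt_irrefl _)
      · rcases hchain (m+1) (by omega) with h | h
        · exact absurd (lt_of_le_of_lt (hMa (m+2) (by omega)) (hE' _ _ h)) (lt_irrefl _)
        · exact h
      · rintro d hd ⟨hd1, -⟩
        have hle : l[m+1]'(Nat.lt_of_succ_lt hm2) ≤ d := rtg_le hE' hd
        exact absurd (hjm.trans_le hle) (not_lt.mpr hd1.le)
    · -- case B : all vertices ≤ j; second-to-last vertex is a non-collider in Z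
      push_neg at hbig
      obtain ⟨t, ht⟩ : ∃ t, l.length = t + 3 := ⟨l.length - 3, by omega⟩
      have hm2 : t + 2 < l.length := by omega
      have hc : l[t+2]'(by omega) = j := by
        rw [getElem_congr' l (by omega) (by omega) (show t + 2 = l.length - 1 by omega)]
        exact hlg
      have hbj : l[t+1]'(by omega) < j := by
        refine lt_of_le_of_ne (hbig (t+1) (by omega)) ?_
        rw [← hc]
        intro h
        have := hinj (show l.get ⟨t+1, by omega⟩ = l.get ⟨t+2, by omega⟩ from h)
        simp at this
      have hbi : l[t+1]'(by omega) ≠ i := by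
        rw [← h0]
        intro h
        have := hinj (show l.get ⟨t+1, by omega⟩ = l.get ⟨0, hlen1⟩ from h)
        simp at this
      refine ⟨l.take t, l[t], l[t+1], l[t+2], l.drop (t+3), list_decomp l t hm2,
        Or.inr ⟨?_, hbj, hbi⟩⟩
      rintro ⟨-, h⟩
      have h' : E' (l[t+2]'hm2) (l[t+1]'(Nat.lt_of_succ_lt hm2)) := h
      rw [hc] at h'
      exact absurd (hE' _ _ h') (not_lt.mpr hbj.le)
  · -- G is not d-separated : the path [i, j] has no interior vertex
    intro hds
    have := hds [i, j] ⟨by simp [ne_of_lt hij], List.isChain_pair.mpr (Or.inl hedge)⟩ (by simp) (by simp)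
    obtain ⟨p, a, b, c, s, heq, -⟩ := this
    have := congrArg List.length heq
    simp at this
    omega
end

section
/- Let G be a DAG with functional model X_a = f_a(X_{pa(a)}, E_a) where all E_a are independent. If a set S of nodes has no common ancestor in G, then the variables {X_s : s ∈ S} cannot all be perfectly correlated and nonconstant; i.e., there is no parameter choice realizing P(X_s = 0 for all s ∈ S) = p and P(X_s = 1 for all s ∈ S) = 1−p with 0 < p < 1. -/
namespace SteudelAy

open Finset

variable {N : Type*} [Fintype N] [DecidableEq N] {k : N → ℕ}

/-- The sample space of error configurations. -/
abbrev Om (k : N → ℕ) := ∀ c, Fin (k c)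

variable (μ : ∀ c, Fin (k c) → ℝ)

/-- product weight -/
def w (e : Om k) : ℝ := ∏ c, μ c (e c)

/-- expectation -/
def Ex (u : Om k → ℝ) : ℝ := ∑ e, w μ e * u e

/-- `u` depends only on coordinates in `C`. -/
def depOn (C : Finset N) (u : Om k → ℝ) : Prop :=
  ∀ e e' : Om k, (∀ c ∈ C, e c = e' c) → u e = u e'

/-- merge: take `e` on `C`, `e'` elsewhere -/
def merge (C : Finset N) (e e' : Om k) : Om k := fun c => if c ∈ C then e c else e' c

/-- conditional expectation given coordinates in `C` -/
def condE (C : Finset N) (u : Om k → ℝ) : Om k → ℝ :=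
  fun e => ∑ e', w μ e' * u (merge C e e')

lemma depOn_mono {C D : Finset N} {u : Om k → ℝ} (h : C ⊆ D) (hu : depOn C u) :
    depOn D u := fun e e' hee => hu e e' fun c hc => hee c (h hc)

lemma sum_w_general {ι : Type*} [Fintype ι] [DecidableEq ι] (m : ι → ℕ)
    (ν : ∀ i, Fin (m i) → ℝ) (h : ∀ i, ∑ x, ν i x = 1) :
    ∑ v : ∀ i, Fin (m i), ∏ i, ν i (v i) = 1 := by
  have := Finset.prod_univ_sum (fun i : ι => (univ : Finset (Fin (m i)))) (fun i x => ν i x)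
  rw [Fintype.piFinset_univ] at this
  rw [← this]
  simp [h]

variable {μ}

lemma sum_w (hμ1 : ∀ c, ∑ x, μ c x = 1) : ∑ e : Om k, w μ e = 1 :=
  sum_w_general _ _ hμ1

lemma nonempty_fin (hμ1 : ∀ c, ∑ x, μ c x = 1) (c : N) : Nonempty (Fin (k c)) := by
  rcases Nat.eq_zero_or_pos (k c) with h | h
  · exfalso
    have h0 : ∑ x : Fin (k c), μ c x = 0 :=
      Finset.sum_eq_zero fun x _ => absurd x.isLt (by omega)
    rw [hμ1 c] at h0
    exact one_ne_zero h0
  · exact ⟨⟨0, h⟩⟩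

lemma nonempty_om (hμ1 : ∀ c, ∑ x, μ c x = 1) : Nonempty (Om k) :=
  Classical.nonempty_pi.mpr fun c => nonempty_fin hμ1 c

/-- Independence: expectation of a product of functions depending on complementary
coordinate sets factorizes. -/
lemma star (hμ1 : ∀ c, ∑ x, μ c x = 1) {A : Finset N} {F G : Om k → ℝ}
    (hF : depOn A F) (hG : depOn Aᶜ G) :
    Ex μ (fun e => F e * G e) = Ex μ F * Ex μ G := by
  classical
  set φ := (Equiv.piEquivPiSubtypeProd (fun c => c ∈ A) (fun c => Fin (k c))).symm with hφ
  have hφapp : ∀ (u : ∀ c : {c // c ∈ A}, Fin (k c)) (v : ∀ c : {c // ¬ c ∈ A}, Fin (k c))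
      (c : N), φ (u, v) c = if h : c ∈ A then u ⟨c, h⟩ else v ⟨c, h⟩ := by
    intro u v c
    simp [hφ, Equiv.piEquivPiSubtypeProd]
  obtain ⟨u₀⟩ : Nonempty (∀ c : {c // c ∈ A}, Fin (k c)) :=
    Classical.nonempty_pi.mpr fun c => nonempty_fin hμ1 c
  obtain ⟨v₀⟩ : Nonempty (∀ c : {c // ¬ c ∈ A}, Fin (k c)) :=
    Classical.nonempty_pi.mpr fun c => nonempty_fin hμ1 c
  set FA : (∀ c : {c // c ∈ A}, Fin (k c)) → ℝ := fun u => F (φ (u, v₀)) with hFA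
  set GB : (∀ c : {c // ¬ c ∈ A}, Fin (k c)) → ℝ := fun v => G (φ (u₀, v)) with hGB
  have hFeq : ∀ u v, F (φ (u, v)) = FA u := by
    intro u v
    apply hF
    intro c hc
    rw [hφapp, hφapp, dif_pos hc, dif_pos hc]
  have hGeq : ∀ u v, G (φ (u, v)) = GB v := by
    intro u v
    apply hG
    intro c hc
    rw [mem_compl] at hc
    rw [hφapp, hφapp, dif_neg hc, dif_neg hc]
  have hwsplit : ∀ u v, w μ (φ (u, v)) =
      (∏ c : {c // c ∈ A}, μ c.1 (u c)) * ∏ c : {c // ¬ c ∈ A}, μ c.1 (v c) := by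
    intro u v
    unfold w
    rw [← Finset.prod_mul_prod_compl A]
    congr 1
    · rw [Finset.prod_subtype A (fun x => Iff.rfl) (fun c => μ c (φ (u,v) c))]
      apply Finset.prod_congr rfl
      intro c _
      rw [hφapp, dif_pos c.2]
    · rw [Finset.prod_subtype Aᶜ (fun x => Finset.mem_compl) (fun c => μ c (φ (u,v) c))]
      apply Finset.prod_congr rfl
      intro c _
      rw [hφapp, dif_neg c.2]
  have key : ∀ (H : Om k → ℝ), Ex μ H = ∑ u, ∑ v,
      ((∏ c : {c // c ∈ A}, μ c.1 (u c)) * ∏ c : {c // ¬ c ∈ A}, μ c.1 (v c)) * H (φ (u, v)) := by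
    intro H
    unfold Ex
    rw [← Equiv.sum_comp φ (fun e => w μ e * H e), Fintype.sum_prod_type]
    exact Finset.sum_congr rfl fun u _ => Finset.sum_congr rfl fun v _ => by
      rw [hwsplit]
  have hsumA : ∑ u : (∀ c : {c // c ∈ A}, Fin (k c)), ∏ c, μ c.1 (u c) = 1 :=
    sum_w_general _ _ fun c => hμ1 c
  have hsumB : ∑ v : (∀ c : {c // ¬ c ∈ A}, Fin (k c)), ∏ c, μ c.1 (v c) = 1 :=
    sum_w_general _ _ fun c => hμ1 c
  rw [key, key, key]
  have h1 : ∀ u v, ((∏ c : {c // c ∈ A}, μ c.1 (u c)) * ∏ c : {c // ¬ c ∈ A}, μ c.1 (v c)) *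
      (fun e => F e * G e) (φ (u, v)) =
      ((∏ c : {c // c ∈ A}, μ c.1 (u c)) * FA u) * (((∏ c : {c // ¬ c ∈ A}, μ c.1 (v c))) * GB v) := by
    intro u v
    simp only
    rw [hFeq, hGeq]
    ring
  calc ∑ u, ∑ v, ((∏ c : {c // c ∈ A}, μ c.1 (u c)) * ∏ c : {c // ¬ c ∈ A}, μ c.1 (v c)) *
        (fun e => F e * G e) (φ (u, v))
      = (∑ u, (∏ c : {c // c ∈ A}, μ c.1 (u c)) * FA u) *
        (∑ v, (∏ c : {c // ¬ c ∈ A}, μ c.1 (v c)) * GB v) := by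
        rw [Fintype.sum_mul_sum]
        exact Finset.sum_congr rfl fun u _ => Finset.sum_congr rfl fun v _ => h1 u v
    _ = (∑ u, ∑ v, ((∏ c : {c // c ∈ A}, μ c.1 (u c)) * ∏ c : {c // ¬ c ∈ A}, μ c.1 (v c)) * F (φ (u, v))) *
        (∑ u, ∑ v, ((∏ c : {c // c ∈ A}, μ c.1 (u c)) * ∏ c : {c // ¬ c ∈ A}, μ c.1 (v c)) * G (φ (u, v))) := by
        congr 1
        · calc ∑ u, (∏ c : {c // c ∈ A}, μ c.1 (u c)) * FA u
              = (∑ u, (∏ c : {c // c ∈ A}, μ c.1 (u c)) * FA u) *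
                (∑ v : (∀ c : {c // ¬ c ∈ A}, Fin (k c)), ∏ c, μ c.1 (v c)) := by rw [hsumB, mul_one]
            _ = ∑ u, ∑ v, ((∏ c : {c // c ∈ A}, μ c.1 (u c)) * ∏ c : {c // ¬ c ∈ A}, μ c.1 (v c)) * F (φ (u, v)) := by
                rw [Fintype.sum_mul_sum]
                exact Finset.sum_congr rfl fun u _ => Finset.sum_congr rfl fun v _ => by
                  rw [hFeq]; ring
        · calc ∑ v, (∏ c : {c // ¬ c ∈ A}, μ c.1 (v c)) * GB v
              = (∑ u : (∀ c : {c // c ∈ A}, Fin (k c)), ∏ c, μ c.1 (u c)) *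
                (∑ v, (∏ c : {c // ¬ c ∈ A}, μ c.1 (v c)) * GB v) := by rw [hsumA, one_mul]
            _ = ∑ u, ∑ v, ((∏ c : {c // c ∈ A}, μ c.1 (u c)) * ∏ c : {c // ¬ c ∈ A}, μ c.1 (v c)) * G (φ (u, v)) := by
                rw [Fintype.sum_mul_sum]
                exact Finset.sum_congr rfl fun u _ => Finset.sum_congr rfl fun v _ => by
                  rw [hGeq]; ring

lemma merge_merge (C : Finset N) (e e' : Om k) :
    merge C (merge C e e') (merge C e' e) = e := by
  funext c
  by_cases h : c ∈ C <;> simp [merge, h]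

lemma w_merge_mul (C : Finset N) (e e' : Om k) :
    w μ (merge C e e') * w μ (merge C e' e) = w μ e * w μ e' := by
  unfold w
  rw [← Finset.prod_mul_distrib, ← Finset.prod_mul_distrib]
  apply Finset.prod_congr rfl
  intro c _
  by_cases h : c ∈ C <;> simp [merge, h, mul_comm]

/-- total expectation -/
lemma Ex_condE (hμ1 : ∀ c, ∑ x, μ c x = 1) (C : Finset N) (z : Om k → ℝ) :
    Ex μ (condE μ C z) = Ex μ z := by
  unfold Ex condE
  have h1 : ∑ e : Om k, w μ e * ∑ e', w μ e' * z (merge C e e') =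
      ∑ q : Om k × Om k, w μ q.1 * (w μ q.2 * z (merge C q.1 q.2)) := by
    rw [Fintype.sum_prod_type]
    exact Finset.sum_congr rfl fun e _ => Finset.mul_sum _ _ _
  rw [h1]
  have hinv : Function.Involutive (fun q : Om k × Om k => (merge C q.1 q.2, merge C q.2 q.1)) := by
    intro q
    exact Prod.ext (merge_merge C q.1 q.2) (merge_merge C q.2 q.1)
  rw [← Function.Bijective.sum_comp hinv.bijective
    (fun q : Om k × Om k => w μ q.1 * (w μ q.2 * z (merge C q.1 q.2)))]
  have h2 : ∀ q : Om k × Om k,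
      w μ (merge C q.1 q.2) * (w μ (merge C q.2 q.1) * z (merge C (merge C q.1 q.2) (merge C q.2 q.1)))
      = w μ q.2 * (w μ q.1 * z q.1) := by
    intro q
    rw [merge_merge, ← mul_assoc, w_merge_mul, mul_assoc, mul_comm (w μ q.1)]
    ring
  calc ∑ q : Om k × Om k,
        w μ (merge C q.1 q.2) * (w μ (merge C q.2 q.1) * z (merge C (merge C q.1 q.2) (merge C q.2 q.1)))
      = ∑ q : Om k × Om k, w μ q.2 * (w μ q.1 * z q.1) := Finset.sum_congr rfl fun q _ => h2 q
    _ = ∑ e : Om k, ∑ e' : Om k, w μ e' * (w μ e * z e) := by rw [Fintype.sum_prod_type]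
    _ = ∑ e : Om k, (∑ e' : Om k, w μ e') * (w μ e * z e) := by
        exact Finset.sum_congr rfl fun e _ => (Finset.sum_mul _ _ _).symm
    _ = ∑ e, w μ e * z e := by rw [sum_w hμ1]; simp

lemma depOn_condE (C : Finset N) (u : Om k → ℝ) : depOn C (condE μ C u) := by
  intro e e' h
  unfold condE
  apply Finset.sum_congr rfl
  intro e'' _
  congr 1
  congr 1
  funext c
  unfold merge
  by_cases hc : c ∈ C
  · simp [hc, h c hc]
  · simp [hc]

lemma condE_of_depOn (hμ1 : ∀ c, ∑ x, μ c x = 1) {C : Finset N} {u : Om k → ℝ}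
    (hu : depOn C u) : condE μ C u = u := by
  funext e
  unfold condE
  have : ∀ e', u (merge C e e') = u e := by
    intro e'
    apply hu
    intro c hc
    simp [merge, hc]
  calc ∑ e', w μ e' * u (merge C e e') = ∑ e', w μ e' * u e :=
        Finset.sum_congr rfl fun e' _ => by rw [this]
    _ = (∑ e' : Om k, w μ e') * u e := (Finset.sum_mul _ _ _).symm
    _ = u e := by rw [sum_w hμ1, one_mul]

lemma condE_sub (C : Finset N) (u v : Om k → ℝ) :
    condE μ C (fun e => u e - v e) = fun e => condE μ C u e - condE μ C v e := by
  funext e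
  unfold condE
  rw [← Finset.sum_sub_distrib]
  exact Finset.sum_congr rfl fun e' _ => by ring

/-- conditional independence at the operator level -/
lemma condE_mul (hμ1 : ∀ c, ∑ x, μ c x = 1) {A B : Finset N} {u v : Om k → ℝ}
    (hu : depOn A u) (hv : depOn B v) :
    condE μ (A ∩ B) (fun e => u e * v e) =
      fun e => condE μ (A ∩ B) u e * condE μ (A ∩ B) v e := by
  funext e
  have hF : depOn (A \ B) (fun e' => u (merge (A ∩ B) e e')) := by
    intro e₁ e₂ h
    apply hu
    intro c hc
    unfold merge
    by_cases h1 : c ∈ A ∩ B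
    · simp [h1]
    · have : c ∈ A \ B := Finset.mem_sdiff.mpr ⟨hc, fun hb => h1 (Finset.mem_inter.mpr ⟨hc, hb⟩)⟩
      simp [h1, h c this]
  have hG : depOn (A \ B)ᶜ (fun e' => v (merge (A ∩ B) e e')) := by
    intro e₁ e₂ h
    apply hv
    intro c hc
    unfold merge
    by_cases h1 : c ∈ A ∩ B
    · simp [h1]
    · have hcA : c ∉ A \ B := fun hd => (Finset.mem_sdiff.mp hd).2 hc
      simp [h1, h c (Finset.mem_compl.mpr hcA)]
  have := star hμ1 hF hG
  unfold Ex at this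
  exact this

/-- almost-everywhere equality w.r.t. the weights -/
def aeEq (μ : ∀ c, Fin (k c) → ℝ) (u v : Om k → ℝ) : Prop :=
  ∀ e : Om k, w μ e ≠ 0 → u e = v e

lemma Ex_congr_ae {u v : Om k → ℝ} (h : aeEq μ u v) : Ex μ u = Ex μ v := by
  unfold Ex
  apply Finset.sum_congr rfl
  intro e _
  by_cases hw : w μ e = 0
  · rw [hw, zero_mul, zero_mul]
  · rw [h e hw]

/-- The merging lemma. -/
lemma merging (hμ0 : ∀ c x, 0 ≤ μ c x) (hμ1 : ∀ c, ∑ x, μ c x = 1)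
    {A B : Finset N} {G H : Om k → ℝ}
    (hG : depOn A G) (hH : depOn B H) (hae : aeEq μ G H) :
    aeEq μ G (condE μ (A ∩ B) G) := by
  set C := A ∩ B with hC
  set Φ := condE μ C G with hΦ
  have hw0 : ∀ e : Om k, 0 ≤ w μ e := fun e => Finset.prod_nonneg fun c _ => hμ0 c (e c)
  have hΦdep : depOn C Φ := depOn_condE C G
  have hGΦA : depOn A (fun e => G e - Φ e) := by
    intro e e' h
    show G e - Φ e = G e' - Φ e'
    rw [hG e e' h, depOn_mono Finset.inter_subset_left hΦdep e e' h]
  have hHΦB : depOn B (fun e => H e - Φ e) := by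
    intro e e' h
    show H e - Φ e = H e' - Φ e'
    rw [hH e e' h, depOn_mono Finset.inter_subset_right hΦdep e e' h]
  -- first piece
  have h1 : Ex μ (fun e => (G e - Φ e) * (G e - H e)) = 0 := by
    apply Finset.sum_eq_zero
    intro e _
    by_cases hw : w μ e = 0
    · rw [hw, zero_mul]
    · show w μ e * ((G e - Φ e) * (G e - H e)) = 0
      rw [hae e hw]
      simp
  -- second piece
  have hcz : condE μ C (fun e => G e - Φ e) = fun _ => 0 := by
    rw [condE_sub, hΦ, condE_of_depOn hμ1 hΦdep]
    funext e
    simp [hΦ]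
  have h2 : Ex μ (fun e => (G e - Φ e) * (H e - Φ e)) = 0 := by
    rw [← Ex_condE hμ1 C, condE_mul hμ1 hGΦA hHΦB, hcz]
    unfold Ex
    simp
  have hsq : Ex μ (fun e => (G e - Φ e)^2) = 0 := by
    have : ∀ e : Om k, w μ e * (G e - Φ e)^2 =
        w μ e * ((G e - Φ e) * (G e - H e)) + w μ e * ((G e - Φ e) * (H e - Φ e)) := by
      intro e
      ring
    unfold Ex
    rw [Finset.sum_congr rfl fun e _ => this e, Finset.sum_add_distrib]
    unfold Ex at h1 h2
    rw [h1, h2, add_zero]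
  intro e hw
  have hterm : ∀ e ∈ (univ : Finset (Om k)), 0 ≤ w μ e * (G e - Φ e)^2 :=
    fun e _ => mul_nonneg (hw0 e) (sq_nonneg _)
  have := (Finset.sum_eq_zero_iff_of_nonneg hterm).mp hsq e (Finset.mem_univ e)
  have h0 : (G e - Φ e)^2 = 0 := by
    rcases mul_eq_zero.mp this with h | h
    · exact absurd h hw
    · exact h
  have := pow_eq_zero_iff (n := 2) (by norm_num) |>.mp h0
  linarith [this]


section Structural

variable {N : Type*} [Fintype N] [DecidableEq N] {k : N → ℕ}
variable (E : N → N → Prop) (f : ∀ c, (N → Bool) → Fin (k c) → Bool)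

lemma wfE (hacyc : ∀ v, ¬ Relation.TransGen E v v) :
    WellFounded (fun d c : N => E d c) := by
  haveI : IsTrans N (Relation.TransGen E) := ⟨fun a b c h1 h2 => h1.trans h2⟩
  haveI : IsIrrefl N (Relation.TransGen E) := ⟨hacyc⟩
  exact Subrelation.wf (fun h => Relation.TransGen.single h)
    (Finite.wellFounded_of_trans_of_irrefl _)

open Classical in
/-- the unique solution of the structural equations -/
noncomputable def sol (hwf : WellFounded (fun d c : N => E d c)) (e : Om k) : N → Bool :=
  fun c => hwf.fix
    (fun c ih => f c (fun d => if h : E d c then ih d h else false) (e c)) c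

lemma sol_spec (hwf : WellFounded (fun d c : N => E d c))
    (hf : ∀ c (x x' : N → Bool) ε, (∀ d, E d c → x d = x' d) → f c x ε = f c x' ε)
    (e : Om k) (c : N) :
    sol E f hwf e c = f c (sol E f hwf e) (e c) := by
  unfold sol
  rw [WellFounded.fix_eq]
  exact hf c _ _ _ (fun d hd => by rw [dif_pos hd])

lemma sol_unique (hwf : WellFounded (fun d c : N => E d c))
    (hf : ∀ c (x x' : N → Bool) ε, (∀ d, E d c → x d = x' d) → f c x ε = f c x' ε)
    (e : Om k) (x : N → Bool) (hx : ∀ c, x c = f c x (e c)) (c : N) :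
    x c = sol E f hwf e c := by
  refine hwf.induction (C := fun c => x c = sol E f hwf e c) c ?_
  intro c ih
  rw [hx c, sol_spec E f hwf hf]
  exact hf c _ _ _ (fun d hd => ih d hd)

lemma sol_dep (hwf : WellFounded (fun d c : N => E d c))
    (hf : ∀ c (x x' : N → Bool) ε, (∀ d, E d c → x d = x' d) → f c x ε = f c x' ε)
    (e e' : Om k) (c : N)
    (h : ∀ a, Relation.ReflTransGen E a c → e a = e' a) :
    sol E f hwf e c = sol E f hwf e' c := by
  refine hwf.induction (C := fun c => (∀ a, Relation.ReflTransGen E a c → e a = e' a) →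
    sol E f hwf e c = sol E f hwf e' c) c ?_ h
  intro c ih h
  rw [sol_spec E f hwf hf, sol_spec E f hwf hf]
  have h1 : e c = e' c := h c Relation.ReflTransGen.refl
  have h2 : f c (sol E f hwf e) (e c) = f c (sol E f hwf e') (e c) :=
    hf c _ _ _ (fun d hd => ih d hd
      (fun a ha => h a (ha.trans (Relation.ReflTransGen.single hd))))
  rw [h2, h1]

open Classical in
/-- ancestors of `c` (including `c`) -/
noncomputable def anc (c : N) : Finset N :=
  Finset.univ.filter (fun a => Relation.ReflTransGen E a c)

lemma mem_anc {a c : N} : a ∈ anc E c ↔ Relation.ReflTransGen E a c := by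
  classical
  simp [anc]

end Structural

lemma sum_rewrite {N : Type*} [Fintype N] [DecidableEq N] {k : N → ℕ}
    (μ : ∀ c, Fin (k c) → ℝ) (E : N → N → Prop)
    (f : ∀ c, (N → Bool) → Fin (k c) → Bool)
    (hwf : WellFounded (fun d c : N => E d c))
    (hf : ∀ c (x x' : N → Bool) ε, (∀ d, E d c → x d = x' d) → f c x ε = f c x' ε)
    (P : (N → Bool) → Prop) [DecidablePred P] :
    (∑ x : N → Bool, if P x then
        ∑ e : ∀ c, Fin (k c), (∏ c, μ c (e c)) *
          (if ∀ c, x c = f c x (e c) then (1 : ℝ) else 0)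
      else 0)
    = ∑ e : Om k, w μ e * (if P (sol E f hwf e) then 1 else 0) := by
  have hiff : ∀ (x : N → Bool) (e : Om k),
      (∀ c, x c = f c x (e c)) ↔ x = sol E f hwf e :=
    fun x e => ⟨fun h => funext fun c => sol_unique E f hwf hf e x h c,
      fun h => by subst h; exact fun c => sol_spec E f hwf hf e c⟩
  calc (∑ x : N → Bool, if P x then
        ∑ e : ∀ c, Fin (k c), (∏ c, μ c (e c)) *
          (if ∀ c, x c = f c x (e c) then (1 : ℝ) else 0) else 0)
      = ∑ x : N → Bool, ∑ e : Om k, w μ e *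
          ((if P x then (1:ℝ) else 0) * (if x = sol E f hwf e then 1 else 0)) := by
        apply Finset.sum_congr rfl
        intro x _
        by_cases hx : P x
        · rw [if_pos hx]
          apply Finset.sum_congr rfl
          intro e _
          rw [if_pos hx, one_mul, if_congr (hiff x e) rfl rfl]
          rfl
        · rw [if_neg hx]
          symm
          apply Finset.sum_eq_zero
          intro e _
          rw [if_neg hx, zero_mul, mul_zero]
    _ = ∑ e : Om k, ∑ x : N → Bool, w μ e *
          ((if P x then (1:ℝ) else 0) * (if x = sol E f hwf e then 1 else 0)) :=
        Finset.sum_comm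
    _ = ∑ e : Om k, w μ e * (if P (sol E f hwf e) then 1 else 0) := by
        apply Finset.sum_congr rfl
        intro e _
        rw [← Finset.mul_sum]
        congr 1
        calc ∑ x : N → Bool, (if P x then (1:ℝ) else 0) * (if x = sol E f hwf e then 1 else 0)
            = ∑ x : N → Bool, (if x = sol E f hwf e then (if P x then (1:ℝ) else 0) else 0) := by
              apply Finset.sum_congr rfl
              intro x _
              by_cases hx : x = sol E f hwf e <;> simp [hx]
          _ = if P (sol E f hwf e) then 1 else 0 := by
              rw [Finset.sum_ite_eq' Finset.univ (sol E f hwf e)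
                (fun x => if P x then (1:ℝ) else 0)]
              simp

end SteudelAy

open SteudelAy in
/-- Steudel–Ay: in a functional causal model on a DAG `G` (independent finite error
variables `E_c` with distributions `μ c`, deterministic functions `f c` depending
only on the parents of `c`), if a set `S` of nodes has no common ancestor (a node
with a directed path, possibly trivial, to every node of `S`), then the variables
`{X_s : s ∈ S}` cannot all be perfectly correlated and nonconstant: no parameter
choice realizes `P(X_s = 0 for all s ∈ S) = p` and `P(X_s = 1 for all s ∈ S) = 1 − p`
with `0 < p < 1`. -/
theorem no_common_ancestor_no_perfect_correlation {N : Type*} [Fintype N] [DecidableEq N]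
    (E : N → N → Prop)
    (hacyc : ∀ v, ¬ Relation.TransGen E v v)
    (S : Finset N)
    (hnca : ¬ ∃ u, ∀ s ∈ S, Relation.ReflTransGen E u s) :
    ¬ ∃ (k : N → ℕ) (μ : ∀ c, Fin (k c) → ℝ) (f : ∀ c, (N → Bool) → Fin (k c) → Bool)
        (p : ℝ),
      (∀ c e, 0 ≤ μ c e) ∧ (∀ c, ∑ e, μ c e = 1) ∧
      (∀ c (x x' : N → Bool) e, (∀ d, E d c → x d = x' d) → f c x e = f c x' e) ∧
      0 < p ∧ p < 1 ∧
      (∑ x : N → Bool, if ∀ s ∈ S, x s = false then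
          ∑ e : ∀ c, Fin (k c), (∏ c, μ c (e c)) *
            (if ∀ c, x c = f c x (e c) then (1 : ℝ) else 0)
        else 0) = p ∧
      (∑ x : N → Bool, if ∀ s ∈ S, x s = true then
          ∑ e : ∀ c, Fin (k c), (∏ c, μ c (e c)) *
            (if ∀ c, x c = f c x (e c) then (1 : ℝ) else 0)
        else 0) = 1 - p := by
  rintro ⟨k, μ, f, p, hμ0, hμ1, hf, hp0, hp1, hP0, hP1⟩
  have hw0 : ∀ e : Om k, 0 ≤ w μ e := fun e => Finset.prod_nonneg fun c _ => hμ0 c (e c)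
  by_cases hN : Nonempty N
  case neg =>
    haveI : IsEmpty N := not_nonempty_iff.mp hN
    have h1 : p = 1 := by
      rw [← hP0]
      have hterm : ∀ x : N → Bool, (if ∀ s ∈ S, x s = false then
          ∑ e : ∀ c, Fin (k c), (∏ c, μ c (e c)) *
            (if ∀ c, x c = f c x (e c) then (1 : ℝ) else 0)
        else 0) = ∑ _e : ∀ c, Fin (k c), (1:ℝ) := by
        intro x
        rw [if_pos (fun s _ => (IsEmpty.false s).elim)]
        apply Finset.sum_congr rfl
        intro e _
        rw [if_pos (fun c => (IsEmpty.false c).elim), mul_one]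
        rw [Finset.univ_eq_empty, Finset.prod_empty]
      rw [Finset.sum_congr rfl (fun x _ => hterm x)]
      have c1 : Fintype.card (N → Bool) = 1 := by simp
      have c2 : Fintype.card (∀ c : N, Fin (k c)) = 1 := by simp
      simp [Finset.sum_const, Finset.card_univ, c1, c2]
    linarith
  case pos =>
  rcases S.eq_empty_or_nonempty with hSe | hS
  · exact hnca ⟨Classical.arbitrary N, by simp [hSe]⟩
  obtain ⟨s0, hs0⟩ := hS
  classical
  have hwf : WellFounded (fun d c : N => E d c) := wfE E hacyc
  set X : Om k → N → Bool := sol E f hwf with hXdef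
  -- rewrite the two probability statements
  have hrw0 := sum_rewrite μ E f hwf hf (fun x : N → Bool => ∀ s ∈ S, x s = false)
  have hrw1 := sum_rewrite μ E f hwf hf (fun x : N → Bool => ∀ s ∈ S, x s = true)
  have hP0' : Ex μ (fun e => if ∀ s ∈ S, X e s = false then (1:ℝ) else 0) = p :=
    hrw0.symm.trans hP0
  have hP1' : Ex μ (fun e => if ∀ s ∈ S, X e s = true then (1:ℝ) else 0) = 1 - p :=
    hrw1.symm.trans hP1
  -- a.e. all the X_s agree
  have hae_all : ∀ e : Om k, w μ e ≠ 0 →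
      ((∀ s ∈ S, X e s = false) ∨ (∀ s ∈ S, X e s = true)) := by
    have hZ : ∑ e : Om k, w μ e * (1 - ((if ∀ s ∈ S, X e s = false then (1:ℝ) else 0)
        + (if ∀ s ∈ S, X e s = true then (1:ℝ) else 0))) = 0 := by
      have expand : ∀ e : Om k, w μ e * (1 - ((if ∀ s ∈ S, X e s = false then (1:ℝ) else 0)
          + (if ∀ s ∈ S, X e s = true then (1:ℝ) else 0)))
          = w μ e - (w μ e * (if ∀ s ∈ S, X e s = false then (1:ℝ) else 0)
            + w μ e * (if ∀ s ∈ S, X e s = true then (1:ℝ) else 0)) := fun e => by ring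
      rw [Finset.sum_congr rfl (fun e _ => expand e), Finset.sum_sub_distrib,
        Finset.sum_add_distrib]
      unfold Ex at hP0' hP1'
      rw [hP0', hP1', sum_w hμ1]
      ring
    have hnn : ∀ e ∈ (Finset.univ : Finset (Om k)),
        0 ≤ w μ e * (1 - ((if ∀ s ∈ S, X e s = false then (1:ℝ) else 0)
        + (if ∀ s ∈ S, X e s = true then (1:ℝ) else 0))) := by
      intro e _
      apply mul_nonneg (hw0 e)
      by_cases h1 : ∀ s ∈ S, X e s = false <;> by_cases h2 : ∀ s ∈ S, X e s = true
      · exfalso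
        have hA := h1 s0 hs0
        have hB := h2 s0 hs0
        rw [hA] at hB
        exact Bool.false_ne_true hB
      · rw [if_pos h1, if_neg h2]; norm_num
      · rw [if_neg h1, if_pos h2]; norm_num
      · rw [if_neg h1, if_neg h2]; norm_num
    have hall := (Finset.sum_eq_zero_iff_of_nonneg hnn).mp hZ
    intro e hw
    have he := hall e (Finset.mem_univ e)
    rcases mul_eq_zero.mp he with h | h
    · exact absurd h hw
    · by_cases h1 : ∀ s ∈ S, X e s = false
      · exact Or.inl h1
      by_cases h2 : ∀ s ∈ S, X e s = true
      · exact Or.inr h2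
      rw [if_neg h1, if_neg h2] at h
      norm_num at h
  -- the indicator of X_{s0}
  set Y : Om k → ℝ := fun e => if X e s0 = true then (1:ℝ) else 0 with hYdef
  have hdep : ∀ c : N, depOn (anc E c) (fun e => if X e c = true then (1:ℝ) else 0) := by
    intro c e e' h
    have hX : X e c = X e' c :=
      sol_dep E f hwf hf e e' c (fun a ha => h a ((mem_anc E).mpr ha))
    show (if X e c = true then (1:ℝ) else 0) = (if X e' c = true then (1:ℝ) else 0)
    rw [hX]
  have haeS : ∀ s ∈ S, aeEq μ Y (fun e => if X e s = true then (1:ℝ) else 0) := by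
    intro s hs e hw
    show (if X e s0 = true then (1:ℝ) else 0) = (if X e s = true then (1:ℝ) else 0)
    rcases hae_all e hw with h | h
    · rw [h s0 hs0, h s hs]
    · rw [h s0 hs0, h s hs]
  -- downward induction over S
  have main : ∀ T : Finset N, T ⊆ S → ∃ Hh : Om k → ℝ,
      depOn (anc E s0 ∩ T.inf (anc E)) Hh ∧ aeEq μ Y Hh := by
    intro T
    induction T using Finset.induction_on with
    | empty =>
      intro _
      refine ⟨Y, ?_, fun e _ => rfl⟩
      rw [Finset.inf_empty, Finset.top_eq_univ, Finset.inter_univ]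
      exact hdep s0
    | @insert a T ha ih =>
      intro hsub
      obtain ⟨Hh, hdepH, haeH⟩ := ih (fun x hx => hsub (Finset.mem_insert_of_mem hx))
      have haS : a ∈ S := hsub (Finset.mem_insert_self a T)
      have haeHG : aeEq μ Hh (fun e => if X e a = true then (1:ℝ) else 0) :=
        fun e hw => (haeH e hw).symm.trans (haeS a haS e hw)
      have hmerge := merging hμ0 hμ1 hdepH (hdep a) haeHG
      have hset : (anc E s0 ∩ T.inf (anc E)) ∩ anc E a
          = anc E s0 ∩ (insert a T).inf (anc E) := by
        rw [Finset.inf_insert, Finset.inf_eq_inter]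
        ext u
        simp only [Finset.mem_inter]
        tauto
      refine ⟨condE μ ((anc E s0 ∩ T.inf (anc E)) ∩ anc E a) Hh, ?_, ?_⟩
      · rw [← hset]
        exact depOn_condE _ _
      · exact fun e hw => (haeH e hw).trans (hmerge e hw)
  obtain ⟨Hh, hdepH, haeH⟩ := main S (subset_refl S)
  have hSinf : anc E s0 ∩ S.inf (anc E) = ∅ := by
    rw [Finset.eq_empty_iff_forall_notMem]
    intro u hu
    apply hnca
    refine ⟨u, fun s hs => ?_⟩
    have h2 : u ∈ S.inf (anc E) := (Finset.mem_inter.mp hu).2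
    exact (mem_anc E).mp (Finset.le_iff_subset.mp (Finset.inf_le hs) h2)
  obtain ⟨e₀⟩ := nonempty_om hμ1
  have hconst : ∀ e, Hh e = Hh e₀ := by
    intro e
    apply hdepH
    intro c hc
    rw [hSinf] at hc
    exact absurd hc (Finset.notMem_empty c)
  -- expectations
  have hEY : Ex μ Y = Hh e₀ := by
    rw [Ex_congr_ae haeH]
    unfold Ex
    calc ∑ e : Om k, w μ e * Hh e = ∑ e : Om k, w μ e * Hh e₀ :=
          Finset.sum_congr rfl fun e _ => by rw [hconst e]
      _ = (∑ e : Om k, w μ e) * Hh e₀ := (Finset.sum_mul _ _ _).symm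
      _ = Hh e₀ := by rw [sum_w hμ1, one_mul]
  have haeYY : aeEq μ (fun e => Y e * Y e) (fun e => Hh e * Hh e) := by
    intro e hw
    show Y e * Y e = Hh e * Hh e
    rw [haeH e hw]
  have hEY2 : Ex μ (fun e => Y e * Y e) = Hh e₀ * Hh e₀ := by
    rw [Ex_congr_ae haeYY]
    unfold Ex
    calc ∑ e : Om k, w μ e * (Hh e * Hh e)
        = ∑ e : Om k, w μ e * (Hh e₀ * Hh e₀) :=
          Finset.sum_congr rfl fun e _ => by rw [hconst e]
      _ = (∑ e : Om k, w μ e) * (Hh e₀ * Hh e₀) := (Finset.sum_mul _ _ _).symm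
      _ = Hh e₀ * Hh e₀ := by rw [sum_w hμ1, one_mul]
  have hYY : ∀ e, Y e * Y e = Y e := by
    intro e
    show (if X e s0 = true then (1:ℝ) else 0) * (if X e s0 = true then (1:ℝ) else 0)
      = (if X e s0 = true then (1:ℝ) else 0)
    by_cases h : X e s0 = true <;> simp [h]
  have hEYY : Ex μ (fun e => Y e * Y e) = Ex μ Y := by
    unfold Ex
    exact Finset.sum_congr rfl fun e _ => by show w μ e * (Y e * Y e) = w μ e * Y e; rw [hYY e]
  have hidem : Hh e₀ * Hh e₀ = Hh e₀ := by rw [← hEY2, hEYY, hEY]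
  -- E[Y] = 1 - p
  have haeYT : aeEq μ Y (fun e => if ∀ s ∈ S, X e s = true then (1:ℝ) else 0) := by
    intro e hw
    show (if X e s0 = true then (1:ℝ) else 0)
      = (if ∀ s ∈ S, X e s = true then (1:ℝ) else 0)
    rcases hae_all e hw with h | h
    · rw [if_neg (by rw [h s0 hs0]; exact Bool.false_ne_true),
        if_neg (fun hcon => by
          have h1 := h s0 hs0
          have h2 := hcon s0 hs0
          rw [h1] at h2
          exact Bool.false_ne_true h2)]
    · rw [if_pos (h s0 hs0), if_pos h]
  have hfin : Hh e₀ = 1 - p := by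
    rw [← hEY, Ex_congr_ae haeYT, hP1']
  rw [hfin] at hidem
  nlinarith
end

section
/- Converting input nodes to visible nodes preserves and reflects realizability of conditionals: a conditional distribution P(X_V | X_I) is realizable by a 3-pDAG 𝒢 (with visible nodes V, input nodes I, latent nodes L, where input nodes are exogenous) if and only if for every product distribution Q(X_I) = Π_{a∈I} Q(X_a) with full support, the joint P(X_V | X_I)·Q(X_I) is realizable under passive observation by the pDAG ConvertItoV(𝒢) obtained by relabeling the input nodes of 𝒢 as visible nodes. -/
/-- Agreement of two global assignments (given as triples of visible, input and
latent assignments) at a given node of the 3-pDAG, whose nodes are `V ⊕ I ⊕ L`. -/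
def CoordEq {V I L : Type*} {valV : V → Type} {valI : I → Type} {valL : L → Type}
    (x y : (∀ v, valV v) × (∀ i, valI i) × (∀ l, valL l)) : V ⊕ I ⊕ L → Prop
  | Sum.inl v => x.1 v = y.1 v
  | Sum.inr (Sum.inl i) => x.2.1 i = y.2.1 i
  | Sum.inr (Sum.inr l) => x.2.2 l = y.2.2 l


section Helpers
open Finset

private lemma sum_indicator_unique' {α : Type*} [Fintype α] (p : α → Prop) [DecidablePred p]
    (h : ∃! a, p a) : ∑ a, (if p a then (1:ℝ) else 0) = 1 := by
  obtain ⟨a, ha, hu⟩ := h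
  rw [Finset.sum_eq_single a]
  · simp [ha]
  · intro b _ hb
    rw [if_neg (fun hpb => hb (hu b hpb))]
  · simp

private theorem exists_unique_fixpoint' {N : Type*} [Finite N] (E : N → N → Prop)
    (hacyc : ∀ n, ¬ Relation.TransGen E n n)
    (val : N → Type*) (hne : ∀ n, Nonempty (val n))
    (h : ∀ n, (∀ m, val m) → val n)
    (hdep : ∀ n x y, (∀ m, E m n → x m = y m) → h n x = h n y) :
    ∃! x : ∀ n, val n, ∀ n, x n = h n x := by
  classical
  haveI : IsTrans N (Relation.TransGen E) := ⟨fun _ _ _ => Relation.TransGen.trans⟩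
  haveI : IsIrrefl N (Relation.TransGen E) := ⟨hacyc⟩
  have hwf : WellFounded E :=
    Subrelation.wf (fun {a b} hab => Relation.TransGen.single hab)
      (Finite.wellFounded_of_trans_of_irrefl _)
  let F : ∀ n, (∀ m, E m n → val m) → val n :=
    fun n rec => h n (fun m => if hm : E m n then rec m hm else Classical.choice (hne m))
  let x : ∀ n, val n := fun n => hwf.fix F n
  have hx : ∀ n, x n = h n x := by
    intro n
    show hwf.fix F n = _
    rw [hwf.fix_eq F n]
    refine hdep n _ x (fun m hm => ?_)
    simp only [dif_pos hm]
    rfl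
  refine ⟨x, hx, ?_⟩
  intro y hy
  funext n
  refine hwf.induction (C := fun n => y n = x n) n (fun n ih => ?_)
  show y n = x n
  rw [hy n, hx n]
  exact hdep n y x (fun m hm => ih m hm)

private lemma sum4_split' {A B C D : Type*} [Fintype A] [Fintype B] [Fintype C] [Fintype D]
    (g : A → B → D → ℝ) (h : C → ℝ) :
    (∑ a : A, ∑ b : B, ∑ c : C, ∑ d : D, g a b d * h c)
      = (∑ a : A, ∑ b : B, ∑ d : D, g a b d) * ∑ c : C, h c := by
  simp only [← Finset.sum_mul, ← Finset.mul_sum]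

private lemma sum_swap_weight' {α β : Type*} [Fintype α] [Fintype β] (W : β → ℝ)
    (p : α → β → Prop) [∀ a b, Decidable (p a b)]
    (hcount : ∀ b, ∑ a : α, (if p a b then (1:ℝ) else 0) = 1)
    (hW : ∑ b : β, W b = 1) :
    ∑ a : α, ∑ b : β, W b * (if p a b then (1:ℝ) else 0) = 1 := by
  rw [Finset.sum_comm]
  calc ∑ b : β, ∑ a : α, W b * (if p a b then (1:ℝ) else 0)
      = ∑ b : β, W b * ∑ a : α, (if p a b then (1:ℝ) else 0) := by
        refine Finset.sum_congr rfl fun b _ => ?_; rw [Finset.mul_sum]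
    _ = ∑ b : β, W b := by
        refine Finset.sum_congr rfl fun b _ => ?_; rw [hcount b, mul_one]
    _ = 1 := hW

private lemma sum_pi_prod' {ι : Type*} [Fintype ι] [DecidableEq ι] {δ : ι → Type*}
    [∀ i, Fintype (δ i)] [∀ i, DecidableEq (δ i)]
    (μ : ∀ i, δ i → ℝ) (h : ∀ i, ∑ e, μ i e = 1) :
    ∑ g : ∀ i, δ i, ∏ i, μ i (g i) = 1 := by
  classical
  have := Finset.prod_univ_sum (fun i => (Finset.univ : Finset (δ i))) (fun i e => μ i e)
  rw [Fintype.piFinset_univ] at this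
  rw [← this]
  simp [h]

private lemma sum_weight3' {A B C : Type*} [Fintype A] [Fintype B] [Fintype C]
    (f : A → ℝ) (g : B → ℝ) (h : C → ℝ)
    (hf : ∑ a, f a = 1) (hg : ∑ b, g b = 1) (hh : ∑ c, h c = 1) :
    ∑ p : A × B × C, f p.1 * g p.2.1 * h p.2.2 = 1 := by
  simp only [Fintype.sum_prod_type]
  simp only [← Finset.sum_mul, ← Finset.mul_sum]
  rw [hf, hg, hh]; ring

private lemma sum_weight2' {A B : Type*} [Fintype A] [Fintype B]
    (f : A → ℝ) (g : B → ℝ)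
    (hf : ∑ a, f a = 1) (hg : ∑ b, g b = 1) :
    ∑ p : A × B, f p.1 * g p.2 = 1 := by
  simp only [Fintype.sum_prod_type]
  simp only [← Finset.sum_mul, ← Finset.mul_sum]
  rw [hf, hg]; ring

private lemma sum_match_prod' {I : Type*} [Fintype I] [DecidableEq I] {valI : I → Type}
    [∀ i, Fintype (valI i)] [∀ i, DecidableEq (valI i)]
    {kI : I → ℕ} (σ : ∀ i, Fin (kI i) ≃ valI i) (Q : ∀ i, valI i → ℝ) (xi : ∀ i, valI i) :
    ∑ eI : ∀ i, Fin (kI i), (∏ i, Q i (σ i (eI i))) *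
      (if (∀ i, xi i = σ i (eI i)) then (1:ℝ) else 0) = ∏ i, Q i (xi i) := by
  classical
  rw [Finset.sum_eq_single (fun i => (σ i).symm (xi i))]
  · simp [Equiv.apply_symm_apply]
  · intro b _ hb
    rw [if_neg, mul_zero]
    intro hall
    exact hb (funext fun i => ((σ i).symm_apply_eq.mpr (hall i)).symm)
  · simp

private lemma delta_cancel' {I : Type*} [Fintype I] [DecidableEq I]
    (valI : I → Type*) [∀ i, Fintype (valI i)] [∀ i, DecidableEq (valI i)]
    (hne : ∀ i, Nonempty (valI i))
    (d : (∀ i, valI i) → ℝ)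
    (hd : ∀ Q : ∀ i, valI i → ℝ, (∀ i x, 0 < Q i x) → (∀ i, ∑ x, Q i x = 1) →
      ∑ xi, d xi * ∏ i, Q i (xi i) = 0)
    (xi0 : ∀ i, valI i) : d xi0 = 0 := by
  classical
  set U : ∀ i, valI i → ℝ := fun i _ => (Fintype.card (valI i) : ℝ)⁻¹ with hU
  have hcard : ∀ i, (0:ℝ) < (Fintype.card (valI i) : ℝ) := fun i => by
    have := Fintype.card_pos_iff.mpr (hne i)
    exact_mod_cast this
  have hUpos : ∀ i x, 0 < U i x := fun i x => inv_pos.mpr (hcard i)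
  have hUsum : ∀ i, ∑ x, U i x = 1 := fun i => by
    simp only [hU, Finset.sum_const, Finset.card_univ, nsmul_eq_mul]
    exact mul_inv_cancel₀ (ne_of_gt (hcard i))
  set M : ∀ i, valI i → ℝ := fun i x => ((if x = xi0 i then (1:ℝ) else 0) + U i x)/2 with hM
  have hMpos : ∀ i x, 0 < M i x := fun i x => by
    have h1 := hUpos i x
    have h2 : (0:ℝ) ≤ (if x = xi0 i then (1:ℝ) else 0) := by positivity
    show 0 < ((if x = xi0 i then (1:ℝ) else 0) + U i x)/2
    linarith
  have hDsum : ∀ i, ∑ x, (if x = xi0 i then (1:ℝ) else 0) = 1 := fun i => by simp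
  have hMsum : ∀ i, ∑ x, M i x = 1 := fun i => by
    show ∑ x, ((if x = xi0 i then (1:ℝ) else 0) + U i x)/2 = 1
    rw [← Finset.sum_div, Finset.sum_add_distrib, hDsum i, hUsum i]
    norm_num
  have hRt : ∀ t : Finset I,
      ∑ xi, d xi * ∏ i, (if i ∈ t then M i (xi i) else U i (xi i)) = 0 := by
    intro t
    refine hd (fun i x => if i ∈ t then M i x else U i x) (fun i x => ?_) (fun i => ?_)
    · show 0 < if i ∈ t then M i x else U i x
      split
      · exact hMpos i x
      · exact hUpos i x
    · show ∑ x, (if i ∈ t then M i x else U i x) = 1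
      by_cases hit : i ∈ t
      · simp only [if_pos hit]; exact hMsum i
      · simp only [if_neg hit]; exact hUsum i
  have key : ∑ xi, d xi * ∏ i, (if xi i = xi0 i then (1:ℝ) else 0) = 0 := by
    have expand : ∀ xi : ∀ i, valI i, (∏ i, (if xi i = xi0 i then (1:ℝ) else 0))
        = ∑ t : Finset I,
            (∏ i ∈ t, (2 * M i (xi i))) * ∏ i ∈ Finset.univ \ t, (-(U i (xi i))) := by
      intro xi
      have hD : ∀ i, (if xi i = xi0 i then (1:ℝ) else 0)
          = 2 * M i (xi i) + (-(U i (xi i))) := by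
        intro i
        show (if xi i = xi0 i then (1:ℝ) else 0)
            = 2 * (((if xi i = xi0 i then (1:ℝ) else 0) + U i (xi i))/2) + (-(U i (xi i)))
        ring
      calc ∏ i, (if xi i = xi0 i then (1:ℝ) else 0)
          = ∏ i, (2 * M i (xi i) + (-(U i (xi i)))) :=
            Finset.prod_congr rfl (fun i _ => hD i)
        _ = _ := by
            rw [Finset.prod_add, Finset.powerset_univ]
    calc ∑ xi, d xi * ∏ i, (if xi i = xi0 i then (1:ℝ) else 0)
        = ∑ xi, ∑ t : Finset I, d xi *
            ((∏ i ∈ t, (2 * M i (xi i))) * ∏ i ∈ Finset.univ \ t, (-(U i (xi i)))) := by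
          refine Finset.sum_congr rfl fun xi _ => ?_
          rw [expand xi, Finset.mul_sum]
      _ = ∑ t : Finset I, ∑ xi, d xi *
            ((∏ i ∈ t, (2 * M i (xi i))) * ∏ i ∈ Finset.univ \ t, (-(U i (xi i)))) :=
          Finset.sum_comm
      _ = ∑ t : Finset I, ((2:ℝ)^t.card * (-1)^(Finset.univ \ t).card) *
            ∑ xi, d xi * ∏ i, (if i ∈ t then M i (xi i) else U i (xi i)) := by
          refine Finset.sum_congr rfl fun t _ => ?_
          rw [Finset.mul_sum]
          refine Finset.sum_congr rfl fun xi _ => ?_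
          have h1 : ∏ i ∈ t, ((2:ℝ) * M i (xi i)) = 2^t.card * ∏ i ∈ t, M i (xi i) := by
            rw [Finset.prod_mul_distrib, Finset.prod_const]
          have h2 : ∏ i ∈ Finset.univ \ t, (-(U i (xi i)))
              = (-1)^(Finset.univ \ t).card * ∏ i ∈ Finset.univ \ t, U i (xi i) := by
            rw [← Finset.prod_const, ← Finset.prod_mul_distrib]
            refine Finset.prod_congr rfl fun i _ => by ring
          have h3 : (∏ i ∈ t, M i (xi i)) * ∏ i ∈ Finset.univ \ t, U i (xi i)
              = ∏ i, (if i ∈ t then M i (xi i) else U i (xi i)) := by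
            rw [← Finset.prod_sdiff (Finset.subset_univ t)]
            rw [mul_comm]
            congr 1
            · exact Finset.prod_congr rfl fun i hi =>
                (if_neg (Finset.mem_sdiff.mp hi).2).symm
            · exact Finset.prod_congr rfl fun i hi => (if_pos hi).symm
          rw [h1, h2, ← h3]
          ring
      _ = 0 := by
          refine Finset.sum_eq_zero fun t _ => ?_
          rw [hRt t, mul_zero]
  have hpick : ∑ xi, d xi * ∏ i, (if xi i = xi0 i then (1:ℝ) else 0) = d xi0 := by
    have hb : ∀ xi : ∀ i, valI i, (∏ i, (if xi i = xi0 i then (1:ℝ) else 0))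
        = if xi = xi0 then (1:ℝ) else 0 := by
      intro xi
      rw [Finset.prod_boole]
      simp [funext_iff]
    calc ∑ xi, d xi * ∏ i, (if xi i = xi0 i then (1:ℝ) else 0)
        = ∑ xi, d xi * (if xi = xi0 then (1:ℝ) else 0) :=
          Finset.sum_congr rfl fun xi _ => by rw [hb xi]
      _ = d xi0 := by simp
  rw [hpick] at key
  exact key

end Helpers

/-- Realizability of a conditional distribution `P(X_V | X_I)` by a 3-pDAG with
visible nodes `V`, input nodes `I`, latent nodes `L` and edges `E`: there exist
finite latent cardinalities, finite error variables with distributions, and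
functions for all non-input nodes, each depending only on its parents, such that
the induced conditional of visible given input variables equals `P`. -/
def Realizable3 {V I L : Type*} [Fintype V] [DecidableEq V] [Fintype I] [DecidableEq I]
    [Fintype L] [DecidableEq L]
    (valV : V → Type) [∀ v, Fintype (valV v)] [∀ v, DecidableEq (valV v)]
    (valI : I → Type) [∀ i, Fintype (valI i)] [∀ i, DecidableEq (valI i)]
    (E : V ⊕ I ⊕ L → V ⊕ I ⊕ L → Prop)
    (P : (∀ v, valV v) → (∀ i, valI i) → ℝ) : Prop :=
  ∃ (cL : L → ℕ) (kV : V → ℕ) (kL : L → ℕ)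
    (μV : ∀ v, Fin (kV v) → ℝ) (μL : ∀ l, Fin (kL l) → ℝ)
    (fV : ∀ v, ((∀ v', valV v') × (∀ i, valI i) × (∀ l, Fin (cL l))) →
      Fin (kV v) → valV v)
    (fL : ∀ l, ((∀ v', valV v') × (∀ i, valI i) × (∀ l', Fin (cL l'))) →
      Fin (kL l) → Fin (cL l)),
    (∀ v e, 0 ≤ μV v e) ∧ (∀ v, ∑ e, μV v e = 1) ∧
    (∀ l e, 0 ≤ μL l e) ∧ (∀ l, ∑ e, μL l e = 1) ∧
    (∀ v x y e, (∀ m, E m (Sum.inl v) → CoordEq x y m) → fV v x e = fV v y e) ∧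
    (∀ l x y e, (∀ m, E m (Sum.inr (Sum.inr l)) → CoordEq x y m) → fL l x e = fL l y e) ∧
    ∀ (xv : ∀ v, valV v) (xi : ∀ i, valI i),
      (∑ xl : ∀ l, Fin (cL l), ∑ eV : ∀ v, Fin (kV v), ∑ eL : ∀ l, Fin (kL l),
        (∏ v, μV v (eV v)) * (∏ l, μL l (eL l)) *
        (if (∀ v, xv v = fV v (xv, xi, xl) (eV v)) ∧
            (∀ l, xl l = fL l (xv, xi, xl) (eL l)) then (1 : ℝ) else 0))
      = P xv xi

/-- Realizability under passive observation of a joint distribution over `V ∪ I`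
by the pDAG `ConvertItoV(𝒢)` obtained by relabeling the input nodes of the 3-pDAG
as visible: now *all* non-latent nodes, including the former input nodes, carry
causal mechanisms. -/
def RealizableObs {V I L : Type*} [Fintype V] [DecidableEq V] [Fintype I] [DecidableEq I]
    [Fintype L] [DecidableEq L]
    (valV : V → Type) [∀ v, Fintype (valV v)] [∀ v, DecidableEq (valV v)]
    (valI : I → Type) [∀ i, Fintype (valI i)] [∀ i, DecidableEq (valI i)]
    (E : V ⊕ I ⊕ L → V ⊕ I ⊕ L → Prop)
    (Pjoint : (∀ v, valV v) → (∀ i, valI i) → ℝ) : Prop :=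
  ∃ (cL : L → ℕ) (kV : V → ℕ) (kI : I → ℕ) (kL : L → ℕ)
    (μV : ∀ v, Fin (kV v) → ℝ) (μI : ∀ i, Fin (kI i) → ℝ) (μL : ∀ l, Fin (kL l) → ℝ)
    (fV : ∀ v, ((∀ v', valV v') × (∀ i, valI i) × (∀ l, Fin (cL l))) →
      Fin (kV v) → valV v)
    (fI : ∀ i, ((∀ v', valV v') × (∀ i', valI i') × (∀ l, Fin (cL l))) →
      Fin (kI i) → valI i)
    (fL : ∀ l, ((∀ v', valV v') × (∀ i, valI i) × (∀ l', Fin (cL l'))) →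
      Fin (kL l) → Fin (cL l)),
    (∀ v e, 0 ≤ μV v e) ∧ (∀ v, ∑ e, μV v e = 1) ∧
    (∀ i e, 0 ≤ μI i e) ∧ (∀ i, ∑ e, μI i e = 1) ∧
    (∀ l e, 0 ≤ μL l e) ∧ (∀ l, ∑ e, μL l e = 1) ∧
    (∀ v x y e, (∀ m, E m (Sum.inl v) → CoordEq x y m) → fV v x e = fV v y e) ∧
    (∀ i x y e, (∀ m, E m (Sum.inr (Sum.inl i)) → CoordEq x y m) → fI i x e = fI i y e) ∧
    (∀ l x y e, (∀ m, E m (Sum.inr (Sum.inr l)) → CoordEq x y m) → fL l x e = fL l y e) ∧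
    ∀ (xv : ∀ v, valV v) (xi : ∀ i, valI i),
      (∑ xl : ∀ l, Fin (cL l), ∑ eV : ∀ v, Fin (kV v), ∑ eI : ∀ i, Fin (kI i),
        ∑ eL : ∀ l, Fin (kL l),
        (∏ v, μV v (eV v)) * (∏ i, μI i (eI i)) * (∏ l, μL l (eL l)) *
        (if (∀ v, xv v = fV v (xv, xi, xl) (eV v)) ∧
            (∀ i, xi i = fI i (xv, xi, xl) (eI i)) ∧
            (∀ l, xl l = fL l (xv, xi, xl) (eL l)) then (1 : ℝ) else 0))
      = Pjoint xv xi


section Counting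
open Finset

private lemma count_full' {V I L : Type*} [Fintype V] [DecidableEq V] [Fintype I] [DecidableEq I]
    [Fintype L] [DecidableEq L]
    {valV : V → Type} {valI : I → Type}
    (hneV : ∀ v, Nonempty (valV v)) (hneI : ∀ i, Nonempty (valI i))
    (E : V ⊕ I ⊕ L → V ⊕ I ⊕ L → Prop)
    (hacyc : ∀ n, ¬ Relation.TransGen E n n)
    {cL : L → ℕ} (hcL : ∀ l, 0 < cL l)
    {kV : V → ℕ} {kI : I → ℕ} {kL : L → ℕ}
    (fV : ∀ v, ((∀ v', valV v') × (∀ i, valI i) × (∀ l, Fin (cL l))) → Fin (kV v) → valV v)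
    (fI : ∀ i, ((∀ v', valV v') × (∀ i', valI i') × (∀ l, Fin (cL l))) → Fin (kI i) → valI i)
    (fL : ∀ l, ((∀ v', valV v') × (∀ i, valI i) × (∀ l', Fin (cL l'))) → Fin (kL l) → Fin (cL l))
    (hfV : ∀ v x y e, (∀ m, E m (Sum.inl v) → CoordEq x y m) → fV v x e = fV v y e)
    (hfI : ∀ i x y e, (∀ m, E m (Sum.inr (Sum.inl i)) → CoordEq x y m) → fI i x e = fI i y e)
    (hfL : ∀ l x y e, (∀ m, E m (Sum.inr (Sum.inr l)) → CoordEq x y m) → fL l x e = fL l y e)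
    (eV : ∀ v, Fin (kV v)) (eI : ∀ i, Fin (kI i)) (eL : ∀ l, Fin (kL l)) :
    ∃! t : (∀ v, valV v) × (∀ i, valI i) × (∀ l, Fin (cL l)),
      (∀ v, t.1 v = fV v t (eV v)) ∧ (∀ i, t.2.1 i = fI i t (eI i)) ∧
      (∀ l, t.2.2 l = fL l t (eL l)) := by
  classical
  let val : V ⊕ I ⊕ L → Type := fun n => match n with
    | .inl v => valV v
    | .inr (.inl i) => valI i
    | .inr (.inr l) => Fin (cL l)
  have hne : ∀ n, Nonempty (val n) := fun n => match n with
    | .inl v => hneV v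
    | .inr (.inl i) => hneI i
    | .inr (.inr l) => Fin.pos_iff_nonempty.mp (hcL l)
  let toT : (∀ n, val n) → ((∀ v, valV v) × (∀ i, valI i) × (∀ l, Fin (cL l))) :=
    fun z => (fun v => z (.inl v), fun i => z (.inr (.inl i)), fun l => z (.inr (.inr l)))
  let h : ∀ n, (∀ m, val m) → val n := fun n => match n with
    | .inl v => fun z => fV v (toT z) (eV v)
    | .inr (.inl i) => fun z => fI i (toT z) (eI i)
    | .inr (.inr l) => fun z => fL l (toT z) (eL l)
  have hdep : ∀ n x y, (∀ m, E m n → x m = y m) → h n x = h n y := by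
    rintro (v | i | l) x y hxy
    · exact hfV v (toT x) (toT y) (eV v) (fun m hm => by
        rcases m with v' | i' | l' <;> exact hxy _ hm)
    · exact hfI i (toT x) (toT y) (eI i) (fun m hm => by
        rcases m with v' | i' | l' <;> exact hxy _ hm)
    · exact hfL l (toT x) (toT y) (eL l) (fun m hm => by
        rcases m with v' | i' | l' <;> exact hxy _ hm)
  obtain ⟨z, hz, hu⟩ := exists_unique_fixpoint' E hacyc val hne h hdep
  refine ⟨toT z, ⟨fun v => hz (.inl v), fun i => hz (.inr (.inl i)),
    fun l => hz (.inr (.inr l))⟩, ?_⟩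
  rintro ⟨a, b, c⟩ ⟨h1, h2, h3⟩
  have hzt : (fun n => match n with
      | .inl v => a v
      | .inr (.inl i) => b i
      | .inr (.inr l) => c l : ∀ n, val n) = z := by
    refine hu _ (fun n => ?_)
    match n with
    | .inl v => exact h1 v
    | .inr (.inl i) => exact h2 i
    | .inr (.inr l) => exact h3 l
  refine Prod.ext ?_ (Prod.ext ?_ ?_)
  · exact funext (fun v => congrFun hzt (.inl v))
  · exact funext (fun i => congrFun hzt (.inr (.inl i)))
  · exact funext (fun l => congrFun hzt (.inr (.inr l)))

private lemma count_sub' {V I L : Type*} [Fintype V] [DecidableEq V] [Fintype I] [DecidableEq I]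
    [Fintype L] [DecidableEq L]
    {valV : V → Type} {valI : I → Type}
    (hneV : ∀ v, Nonempty (valV v))
    (E : V ⊕ I ⊕ L → V ⊕ I ⊕ L → Prop)
    (hacyc : ∀ n, ¬ Relation.TransGen E n n)
    {cL : L → ℕ} (hcL : ∀ l, 0 < cL l)
    {kV : V → ℕ} {kL : L → ℕ}
    (fV : ∀ v, ((∀ v', valV v') × (∀ i, valI i) × (∀ l, Fin (cL l))) → Fin (kV v) → valV v)
    (fL : ∀ l, ((∀ v', valV v') × (∀ i, valI i) × (∀ l', Fin (cL l'))) → Fin (kL l) → Fin (cL l))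
    (hfV : ∀ v x y e, (∀ m, E m (Sum.inl v) → CoordEq x y m) → fV v x e = fV v y e)
    (hfL : ∀ l x y e, (∀ m, E m (Sum.inr (Sum.inr l)) → CoordEq x y m) → fL l x e = fL l y e)
    (xi : ∀ i, valI i) (eV : ∀ v, Fin (kV v)) (eL : ∀ l, Fin (kL l)) :
    ∃! t : (∀ v, valV v) × (∀ l, Fin (cL l)),
      (∀ v, t.1 v = fV v (t.1, xi, t.2) (eV v)) ∧
      (∀ l, t.2 l = fL l (t.1, xi, t.2) (eL l)) := by
  classical
  let emb : V ⊕ L → V ⊕ I ⊕ L := Sum.elim Sum.inl (fun l => Sum.inr (Sum.inr l))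
  let E' : (V ⊕ L) → (V ⊕ L) → Prop := fun a b => E (emb a) (emb b)
  have hacyc' : ∀ n, ¬ Relation.TransGen E' n n := fun n hn =>
    hacyc (emb n) (Relation.TransGen.lift emb (fun _ _ hab => hab : ∀ a b, E' a b → E (emb a) (emb b)) n n hn)
  let val : V ⊕ L → Type := fun n => match n with
    | .inl v => valV v
    | .inr l => Fin (cL l)
  have hne : ∀ n, Nonempty (val n) := fun n => match n with
    | .inl v => hneV v
    | .inr l => Fin.pos_iff_nonempty.mp (hcL l)
  let toT : (∀ n, val n) → ((∀ v, valV v) × (∀ i, valI i) × (∀ l, Fin (cL l))) :=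
    fun z => (fun v => z (.inl v), xi, fun l => z (.inr l))
  let h : ∀ n, (∀ m, val m) → val n := fun n => match n with
    | .inl v => fun z => fV v (toT z) (eV v)
    | .inr l => fun z => fL l (toT z) (eL l)
  have hdep : ∀ n x y, (∀ m, E' m n → x m = y m) → h n x = h n y := by
    rintro (v | l) x y hxy
    · refine hfV v (toT x) (toT y) (eV v) (fun m hm => ?_)
      rcases m with v' | i' | l'
      · exact hxy (.inl v') hm
      · exact rfl
      · exact hxy (.inr l') hm
    · refine hfL l (toT x) (toT y) (eL l) (fun m hm => ?_)
      rcases m with v' | i' | l'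
      · exact hxy (.inl v') hm
      · exact rfl
      · exact hxy (.inr l') hm
  obtain ⟨z, hz, hu⟩ := exists_unique_fixpoint' E' hacyc' val hne h hdep
  refine ⟨(fun v => z (.inl v), fun l => z (.inr l)),
    ⟨fun v => hz (.inl v), fun l => hz (.inr l)⟩, ?_⟩
  rintro ⟨a, c⟩ ⟨h1, h2⟩
  have hzt : (fun n => match n with
      | .inl v => a v
      | .inr l => c l : ∀ n, val n) = z := by
    refine hu _ (fun n => ?_)
    match n with
    | .inl v => exact h1 v
    | .inr l => exact h2 l
  refine Prod.ext ?_ ?_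
  · exact funext (fun v => congrFun hzt (.inl v))
  · exact funext (fun l => congrFun hzt (.inr l))

private lemma total_one' {V I L : Type*} [Fintype V] [DecidableEq V] [Fintype I] [DecidableEq I]
    [Fintype L] [DecidableEq L]
    {valV : V → Type} [∀ v, Fintype (valV v)] [∀ v, DecidableEq (valV v)]
    {valI : I → Type} [∀ i, Fintype (valI i)] [∀ i, DecidableEq (valI i)]
    (hneV : ∀ v, Nonempty (valV v)) (hneI : ∀ i, Nonempty (valI i))
    (E : V ⊕ I ⊕ L → V ⊕ I ⊕ L → Prop)
    (hacyc : ∀ n, ¬ Relation.TransGen E n n)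
    {cL : L → ℕ} (hcL : ∀ l, 0 < cL l)
    {kV : V → ℕ} {kI : I → ℕ} {kL : L → ℕ}
    (μV : ∀ v, Fin (kV v) → ℝ) (μI : ∀ i, Fin (kI i) → ℝ) (μL : ∀ l, Fin (kL l) → ℝ)
    (fV : ∀ v, ((∀ v', valV v') × (∀ i, valI i) × (∀ l, Fin (cL l))) → Fin (kV v) → valV v)
    (fI : ∀ i, ((∀ v', valV v') × (∀ i', valI i') × (∀ l, Fin (cL l))) → Fin (kI i) → valI i)
    (fL : ∀ l, ((∀ v', valV v') × (∀ i, valI i) × (∀ l', Fin (cL l'))) → Fin (kL l) → Fin (cL l))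
    (hμV1 : ∀ v, ∑ e, μV v e = 1) (hμI1 : ∀ i, ∑ e, μI i e = 1) (hμL1 : ∀ l, ∑ e, μL l e = 1)
    (hfV : ∀ v x y e, (∀ m, E m (Sum.inl v) → CoordEq x y m) → fV v x e = fV v y e)
    (hfI : ∀ i x y e, (∀ m, E m (Sum.inr (Sum.inl i)) → CoordEq x y m) → fI i x e = fI i y e)
    (hfL : ∀ l x y e, (∀ m, E m (Sum.inr (Sum.inr l)) → CoordEq x y m) → fL l x e = fL l y e) :
    ∑ xv : ∀ v, valV v, ∑ xi : ∀ i, valI i,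
      (∑ xl : ∀ l, Fin (cL l), ∑ eV : ∀ v, Fin (kV v), ∑ eI : ∀ i, Fin (kI i),
        ∑ eL : ∀ l, Fin (kL l),
        (∏ v, μV v (eV v)) * (∏ i, μI i (eI i)) * (∏ l, μL l (eL l)) *
        (if (∀ v, xv v = fV v (xv, xi, xl) (eV v)) ∧
            (∀ i, xi i = fI i (xv, xi, xl) (eI i)) ∧
            (∀ l, xl l = fL l (xv, xi, xl) (eL l)) then (1 : ℝ) else 0)) = 1 := by
  classical
  have packed :
      (∑ a : (∀ v, valV v) × (∀ i, valI i) × (∀ l, Fin (cL l)),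
        ∑ b : (∀ v, Fin (kV v)) × (∀ i, Fin (kI i)) × (∀ l, Fin (kL l)),
        ((∏ v, μV v (b.1 v)) * (∏ i, μI i (b.2.1 i)) * (∏ l, μL l (b.2.2 l))) *
        (if (∀ v, a.1 v = fV v a (b.1 v)) ∧ (∀ i, a.2.1 i = fI i a (b.2.1 i)) ∧
            (∀ l, a.2.2 l = fL l a (b.2.2 l)) then (1:ℝ) else 0))
      = ∑ xv : ∀ v, valV v, ∑ xi : ∀ i, valI i,
      (∑ xl : ∀ l, Fin (cL l), ∑ eV : ∀ v, Fin (kV v), ∑ eI : ∀ i, Fin (kI i),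
        ∑ eL : ∀ l, Fin (kL l),
        (∏ v, μV v (eV v)) * (∏ i, μI i (eI i)) * (∏ l, μL l (eL l)) *
        (if (∀ v, xv v = fV v (xv, xi, xl) (eV v)) ∧
            (∀ i, xi i = fI i (xv, xi, xl) (eI i)) ∧
            (∀ l, xl l = fL l (xv, xi, xl) (eL l)) then (1 : ℝ) else 0)) := by
    simp only [Fintype.sum_prod_type]
  rw [← packed]
  refine sum_swap_weight' _
    (fun (a : (∀ v, valV v) × (∀ i, valI i) × (∀ l, Fin (cL l)))
         (b : (∀ v, Fin (kV v)) × (∀ i, Fin (kI i)) × (∀ l, Fin (kL l))) =>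
      (∀ v, a.1 v = fV v a (b.1 v)) ∧ (∀ i, a.2.1 i = fI i a (b.2.1 i)) ∧
      (∀ l, a.2.2 l = fL l a (b.2.2 l))) (fun b => ?_) ?_
  · exact sum_indicator_unique' _
      (count_full' hneV hneI E hacyc hcL fV fI fL hfV hfI hfL b.1 b.2.1 b.2.2)
  · exact sum_weight3' _ _ _ (sum_pi_prod' μV hμV1) (sum_pi_prod' μI hμI1) (sum_pi_prod' μL hμL1)

private lemma sub_total_one' {V I L : Type*} [Fintype V] [DecidableEq V] [Fintype I] [DecidableEq I]
    [Fintype L] [DecidableEq L]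
    {valV : V → Type} [∀ v, Fintype (valV v)] [∀ v, DecidableEq (valV v)]
    {valI : I → Type} [∀ i, Fintype (valI i)] [∀ i, DecidableEq (valI i)]
    (hneV : ∀ v, Nonempty (valV v))
    (E : V ⊕ I ⊕ L → V ⊕ I ⊕ L → Prop)
    (hacyc : ∀ n, ¬ Relation.TransGen E n n)
    {cL : L → ℕ} (hcL : ∀ l, 0 < cL l)
    {kV : V → ℕ} {kL : L → ℕ}
    (μV : ∀ v, Fin (kV v) → ℝ) (μL : ∀ l, Fin (kL l) → ℝ)
    (fV : ∀ v, ((∀ v', valV v') × (∀ i, valI i) × (∀ l, Fin (cL l))) → Fin (kV v) → valV v)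
    (fL : ∀ l, ((∀ v', valV v') × (∀ i, valI i) × (∀ l', Fin (cL l'))) → Fin (kL l) → Fin (cL l))
    (hμV1 : ∀ v, ∑ e, μV v e = 1) (hμL1 : ∀ l, ∑ e, μL l e = 1)
    (hfV : ∀ v x y e, (∀ m, E m (Sum.inl v) → CoordEq x y m) → fV v x e = fV v y e)
    (hfL : ∀ l x y e, (∀ m, E m (Sum.inr (Sum.inr l)) → CoordEq x y m) → fL l x e = fL l y e)
    (xi : ∀ i, valI i) :
    ∑ xv : ∀ v, valV v,
      (∑ xl : ∀ l, Fin (cL l), ∑ eV : ∀ v, Fin (kV v), ∑ eL : ∀ l, Fin (kL l),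
        (∏ v, μV v (eV v)) * (∏ l, μL l (eL l)) *
        (if (∀ v, xv v = fV v (xv, xi, xl) (eV v)) ∧
            (∀ l, xl l = fL l (xv, xi, xl) (eL l)) then (1 : ℝ) else 0)) = 1 := by
  classical
  have packed :
      (∑ a : (∀ v, valV v) × (∀ l, Fin (cL l)),
        ∑ b : (∀ v, Fin (kV v)) × (∀ l, Fin (kL l)),
        ((∏ v, μV v (b.1 v)) * (∏ l, μL l (b.2 l))) *
        (if (∀ v, a.1 v = fV v (a.1, xi, a.2) (b.1 v)) ∧
            (∀ l, a.2 l = fL l (a.1, xi, a.2) (b.2 l)) then (1:ℝ) else 0))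
      = ∑ xv : ∀ v, valV v,
      (∑ xl : ∀ l, Fin (cL l), ∑ eV : ∀ v, Fin (kV v), ∑ eL : ∀ l, Fin (kL l),
        (∏ v, μV v (eV v)) * (∏ l, μL l (eL l)) *
        (if (∀ v, xv v = fV v (xv, xi, xl) (eV v)) ∧
            (∀ l, xl l = fL l (xv, xi, xl) (eL l)) then (1 : ℝ) else 0)) := by
    simp only [Fintype.sum_prod_type]
  rw [← packed]
  refine sum_swap_weight' _
    (fun (a : (∀ v, valV v) × (∀ l, Fin (cL l)))
         (b : (∀ v, Fin (kV v)) × (∀ l, Fin (kL l))) =>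
      (∀ v, a.1 v = fV v (a.1, xi, a.2) (b.1 v)) ∧
      (∀ l, a.2 l = fL l (a.1, xi, a.2) (b.2 l))) (fun b => ?_) ?_
  · exact sum_indicator_unique' _
      (count_sub' hneV E hacyc hcL fV fL hfV hfL xi b.1 b.2)
  · exact sum_weight2' _ _ (sum_pi_prod' μV hμV1) (sum_pi_prod' μL hμL1)

end Counting

set_option maxHeartbeats 2000000 in
/-- Converting input nodes to visible nodes preserves and reflects realizability of
conditionals: a conditional `P(X_V | X_I)` is realizable by a 3-pDAG 𝒢 (with
parentless input nodes) iff for every full-support product distribution `Q` over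
the input variables, the joint `P(X_V | X_I) · Q(X_I)` is realizable under passive
observation by the pDAG `ConvertItoV(𝒢)`. -/
theorem convertItoV_realizability {V I L : Type*}
    [Fintype V] [DecidableEq V] [Fintype I] [DecidableEq I] [Fintype L] [DecidableEq L]
    (valV : V → Type) [∀ v, Fintype (valV v)] [∀ v, DecidableEq (valV v)]
    (valI : I → Type) [∀ i, Fintype (valI i)] [∀ i, DecidableEq (valI i)]
    (E : V ⊕ I ⊕ L → V ⊕ I ⊕ L → Prop)
    (hacyc : ∀ v, ¬ Relation.TransGen E v v)
    (hinput : ∀ (i : I) (x : V ⊕ I ⊕ L), ¬ E x (Sum.inr (Sum.inl i)))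
    (P : (∀ v, valV v) → (∀ i, valI i) → ℝ) :
    Realizable3 valV valI E P ↔
      ∀ Q : ∀ i, valI i → ℝ, (∀ i x, 0 < Q i x) → (∀ i, ∑ x, Q i x = 1) →
        RealizableObs valV valI E (fun xv xi => P xv xi * ∏ i, Q i (xi i)) := by
  classical
  constructor
  · rintro ⟨cL, kV, kL, μV, μL, fV, fL, hμV0, hμV1, hμL0, hμL1, hfV, hfL, heq⟩
    intro Q hQpos hQsum
    refine ⟨cL, kV, (fun i => Fintype.card (valI i)), kL, μV,
      (fun i e => Q i ((Fintype.equivFin (valI i)).symm e)), μL, fV,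
      (fun i _ e => (Fintype.equivFin (valI i)).symm e), fL,
      hμV0, hμV1, ?_, ?_, hμL0, hμL1, hfV, (fun i x y e _ => rfl), hfL, ?_⟩
    · exact fun i e => le_of_lt (hQpos i _)
    · intro i
      rw [Equiv.sum_comp ((Fintype.equivFin (valI i)).symm) (Q i)]
      exact hQsum i
    · intro xv xi
      trans (∑ xl : ∀ l, Fin (cL l), ∑ eV : ∀ v, Fin (kV v),
          ∑ eI : ∀ i, Fin (Fintype.card (valI i)), ∑ eL : ∀ l, Fin (kL l),
          ((∏ v, μV v (eV v)) * (∏ l, μL l (eL l)) *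
            (if (∀ v, xv v = fV v (xv, xi, xl) (eV v)) ∧
                (∀ l, xl l = fL l (xv, xi, xl) (eL l)) then (1:ℝ) else 0)) *
          ((∏ i, Q i ((Fintype.equivFin (valI i)).symm (eI i))) *
            (if (∀ i, xi i = (Fintype.equivFin (valI i)).symm (eI i)) then (1:ℝ) else 0)))
      · refine Finset.sum_congr rfl fun xl _ => Finset.sum_congr rfl fun eV _ =>
          Finset.sum_congr rfl fun eI _ => Finset.sum_congr rfl fun eL _ => ?_
        by_cases h1 : ∀ v, xv v = fV v (xv, xi, xl) (eV v) <;>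
          by_cases h2 : ∀ i, xi i = (Fintype.equivFin (valI i)).symm (eI i) <;>
          by_cases h3 : ∀ l, xl l = fL l (xv, xi, xl) (eL l) <;>
          simp [h1, h2, h3] <;> ring
      · rw [sum4_split'
          (fun (xl : ∀ l, Fin (cL l)) (eV : ∀ v, Fin (kV v)) (eL : ∀ l, Fin (kL l)) =>
            (∏ v, μV v (eV v)) * (∏ l, μL l (eL l)) *
            (if (∀ v, xv v = fV v (xv, xi, xl) (eV v)) ∧
                (∀ l, xl l = fL l (xv, xi, xl) (eL l)) then (1:ℝ) else 0))
          (fun (eI : ∀ i, Fin (Fintype.card (valI i))) =>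
            (∏ i, Q i ((Fintype.equivFin (valI i)).symm (eI i))) *
            (if (∀ i, xi i = (Fintype.equivFin (valI i)).symm (eI i)) then (1:ℝ) else 0))]
        rw [heq xv xi,
          sum_match_prod' (fun i => (Fintype.equivFin (valI i)).symm) Q xi]
  · intro hQ
    by_cases hne : (∀ v, Nonempty (valV v)) ∧ (∀ i, Nonempty (valI i))
    swap
    · have hE : IsEmpty ((∀ v, valV v) × (∀ i, valI i)) := by
        rw [not_and_or] at hne
        rcases hne with h | h
        · obtain ⟨v0, hv0⟩ := not_forall.mp h
          exact ⟨fun p => hv0 ⟨p.1 v0⟩⟩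
        · obtain ⟨i0, hi0⟩ := not_forall.mp h
          exact ⟨fun p => hi0 ⟨p.2 i0⟩⟩
      exact ⟨fun _ => 1, fun _ => 1, fun _ => 1, fun _ _ => 1, fun _ _ => 1,
        fun v x e => (hE.false ⟨x.1, x.2.1⟩).elim, fun l x e => (hE.false ⟨x.1, x.2.1⟩).elim,
        fun v e => zero_le_one, fun v => by simp, fun l e => zero_le_one, fun l => by simp,
        fun v x y e _ => (hE.false ⟨x.1, x.2.1⟩).elim,
        fun l x y e _ => (hE.false ⟨x.1, x.2.1⟩).elim,
        fun xv xi => (hE.false ⟨xv, xi⟩).elim⟩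
    · obtain ⟨hneV, hneI⟩ := hne
      have hcard : ∀ i, (0:ℝ) < (Fintype.card (valI i) : ℝ) := fun i => by
        have := Fintype.card_pos_iff.mpr (hneI i)
        exact_mod_cast this
      set Q0 : ∀ i, valI i → ℝ := fun i _ => (Fintype.card (valI i) : ℝ)⁻¹ with hQ0def
      have hQ0pos : ∀ i (x : valI i), 0 < Q0 i x := fun i x => inv_pos.mpr (hcard i)
      have hQ0sum : ∀ i, ∑ x, Q0 i x = 1 := fun i => by
        simp only [hQ0def, Finset.sum_const, Finset.card_univ, nsmul_eq_mul]
        exact mul_inv_cancel₀ (ne_of_gt (hcard i))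
      obtain ⟨cL, kV, kI, kL, μV, μI, μL, fV, fI, fL, hμV0, hμV1, hμI0, hμI1,
        hμL0, hμL1, hfV, hfI, hfL, heq⟩ := hQ Q0 hQ0pos hQ0sum
      by_cases hP0 : ∀ xv xi, P xv xi = 0
      · by_cases hcL : ∀ l, 0 < cL l
        · exfalso
          have htot := total_one' hneV hneI E hacyc hcL μV μI μL fV fI fL
            hμV1 hμI1 hμL1 hfV hfI hfL
          have htot' : ∑ xv : ∀ v, valV v, ∑ xi : ∀ i, valI i,
              P xv xi * ∏ i, Q0 i (xi i) = 1 := by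
            rw [← htot]
            exact Finset.sum_congr rfl fun xv _ =>
              Finset.sum_congr rfl fun xi _ => (heq xv xi).symm
          simp [hP0] at htot'
        · push_neg at hcL
          obtain ⟨l0, hl0⟩ := hcL
          have hl0' : cL l0 = 0 := Nat.le_zero.mp hl0
          haveI hfin0 : IsEmpty (Fin (cL l0)) := by rw [hl0']; infer_instance
          haveI hTL : IsEmpty (∀ l, Fin (cL l)) := ⟨fun f => hfin0.false (f l0)⟩
          refine ⟨cL, fun _ => 1, fun _ => 1, fun _ _ => 1, fun _ _ => 1,
            fun v x e => (hTL.false x.2.2).elim, fun l x e => (hTL.false x.2.2).elim,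
            fun v e => zero_le_one, fun v => by simp, fun l e => zero_le_one,
            fun l => by simp,
            fun v x y e _ => (hTL.false x.2.2).elim,
            fun l x y e _ => (hTL.false x.2.2).elim,
            fun xv xi => ?_⟩
          rw [hP0 xv xi,
            show (Finset.univ : Finset (∀ l, Fin (cL l))) = ∅ from Finset.univ_eq_empty,
            Finset.sum_empty]
      · push_neg at hP0
        obtain ⟨xv0, xi0, hP0⟩ := hP0
        have hcL : ∀ l, 0 < cL l := by
          by_contra hc
          push_neg at hc
          obtain ⟨l0, hl0⟩ := hc
          have hl0' : cL l0 = 0 := Nat.le_zero.mp hl0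
          haveI hfin0 : IsEmpty (Fin (cL l0)) := by rw [hl0']; infer_instance
          haveI hTL : IsEmpty (∀ l, Fin (cL l)) := ⟨fun f => hfin0.false (f l0)⟩
          have h0 := heq xv0 xi0
          rw [show (Finset.univ : Finset (∀ l, Fin (cL l))) = ∅ from Finset.univ_eq_empty,
            Finset.sum_empty] at h0
          have hq : (0:ℝ) < ∏ i, Q0 i (xi0 i) :=
            Finset.prod_pos (fun i _ => hQ0pos i (xi0 i))
          rcases mul_eq_zero.mp h0.symm with h | h
          · exact hP0 h
          · linarith
        haveI hfinL : ∀ l, Nonempty (Fin (cL l)) := fun l => Fin.pos_iff_nonempty.mp (hcL l)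
        have hS : ∀ xi : ∀ i, valI i, ∑ xv, P xv xi = 1 := by
          intro xi1
          have hdall : ∀ Q : ∀ i, valI i → ℝ, (∀ i x, 0 < Q i x) → (∀ i, ∑ x, Q i x = 1) →
              ∑ xi, ((∑ xv, P xv xi) - 1) * ∏ i, Q i (xi i) = 0 := by
            intro Q hp hs
            obtain ⟨cL', kV', kI', kL', μV', μI', μL', fV', fI', fL', h1, h2, h3, h4,
              h5, h6, h7, h8, h9, heq'⟩ := hQ Q hp hs
            have hQprodpos : ∀ xi : ∀ i, valI i, (0:ℝ) < ∏ i, Q i (xi i) :=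
              fun xi => Finset.prod_pos (fun i _ => hp i _)
            have hcL' : ∀ l, 0 < cL' l := by
              by_contra hc
              push_neg at hc
              obtain ⟨l0, hl0⟩ := hc
              have hl0' : cL' l0 = 0 := Nat.le_zero.mp hl0
              haveI hfin0 : IsEmpty (Fin (cL' l0)) := by rw [hl0']; infer_instance
              haveI hTL : IsEmpty (∀ l, Fin (cL' l)) := ⟨fun f => hfin0.false (f l0)⟩
              have h0 := heq' xv0 xi0
              rw [show (Finset.univ : Finset (∀ l, Fin (cL' l))) = ∅ from Finset.univ_eq_empty,
                Finset.sum_empty] at h0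
              have hq := hQprodpos xi0
              rcases mul_eq_zero.mp h0.symm with h | h
              · exact hP0 h
              · linarith
            have htot := total_one' hneV hneI E hacyc hcL' μV' μI' μL' fV' fI' fL'
              h2 h4 h6 h7 h8 h9
            have htot' : ∑ xv : ∀ v, valV v, ∑ xi : ∀ i, valI i,
                P xv xi * ∏ i, Q i (xi i) = 1 := by
              rw [← htot]
              exact Finset.sum_congr rfl fun xv _ =>
                Finset.sum_congr rfl fun xi _ => (heq' xv xi).symm
            have hq1 : ∑ xi : ∀ i, valI i, ∏ i, Q i (xi i) = 1 := sum_pi_prod' Q hs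
            calc ∑ xi : ∀ i, valI i, ((∑ xv, P xv xi) - 1) * ∏ i, Q i (xi i)
                = ∑ xi : ∀ i, valI i,
                    ((∑ xv, P xv xi * ∏ i, Q i (xi i)) - ∏ i, Q i (xi i)) := by
                  refine Finset.sum_congr rfl fun xi _ => ?_
                  rw [sub_mul, one_mul, Finset.sum_mul]
              _ = (∑ xi : ∀ i, valI i, ∑ xv, P xv xi * ∏ i, Q i (xi i))
                    - ∑ xi : ∀ i, valI i, ∏ i, Q i (xi i) :=
                  Finset.sum_sub_distrib _ _
              _ = 0 := by rw [Finset.sum_comm, htot', hq1, sub_self]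
          have := delta_cancel' valI hneI (fun xi => (∑ xv, P xv xi) - 1) hdall xi1
          linarith
        obtain ⟨x0⟩ : Nonempty ((∀ v, valV v) × (∀ i, valI i) × (∀ l, Fin (cL l))) :=
          ⟨⟨fun v => (hneV v).some, fun i => (hneI i).some, fun l => (hfinL l).some⟩⟩
        set g : ∀ i, Fin (kI i) → valI i := fun i e => fI i x0 e with hgdef
        have hgI : ∀ i x e, fI i x e = g i e := fun i x e =>
          hfI i x x0 e (fun m hm => absurd hm (hinput i m))
        set T : (∀ v, valV v) → (∀ i, valI i) → ℝ := fun xv xi =>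
          ∑ xl : ∀ l, Fin (cL l), ∑ eV : ∀ v, Fin (kV v), ∑ eL : ∀ l, Fin (kL l),
            (∏ v, μV v (eV v)) * (∏ l, μL l (eL l)) *
            (if (∀ v, xv v = fV v (xv, xi, xl) (eV v)) ∧
                (∀ l, xl l = fL l (xv, xi, xl) (eL l)) then (1:ℝ) else 0) with hT
        set w : (∀ i, valI i) → ℝ := fun xi =>
          ∑ eI : ∀ i, Fin (kI i), (∏ i, μI i (eI i)) *
            (if (∀ i, xi i = g i (eI i)) then (1:ℝ) else 0) with hw
        have hsplit : ∀ xv xi, T xv xi * w xi = P xv xi * ∏ i, Q0 i (xi i) := by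
          intro xv xi
          calc T xv xi * w xi
              = (∑ xl : ∀ l, Fin (cL l), ∑ eV : ∀ v, Fin (kV v), ∑ eL : ∀ l, Fin (kL l),
                  (∏ v, μV v (eV v)) * (∏ l, μL l (eL l)) *
                  (if (∀ v, xv v = fV v (xv, xi, xl) (eV v)) ∧
                      (∀ l, xl l = fL l (xv, xi, xl) (eL l)) then (1:ℝ) else 0)) *
                (∑ eI : ∀ i, Fin (kI i), (∏ i, μI i (eI i)) *
                  (if (∀ i, xi i = g i (eI i)) then (1:ℝ) else 0)) := by rw [hT, hw]
            _ = ∑ xl : ∀ l, Fin (cL l), ∑ eV : ∀ v, Fin (kV v), ∑ eI : ∀ i, Fin (kI i),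
                  ∑ eL : ∀ l, Fin (kL l),
                  ((∏ v, μV v (eV v)) * (∏ l, μL l (eL l)) *
                  (if (∀ v, xv v = fV v (xv, xi, xl) (eV v)) ∧
                      (∀ l, xl l = fL l (xv, xi, xl) (eL l)) then (1:ℝ) else 0)) *
                  ((∏ i, μI i (eI i)) *
                  (if (∀ i, xi i = g i (eI i)) then (1:ℝ) else 0)) := by
                rw [sum4_split'
                  (fun (xl : ∀ l, Fin (cL l)) (eV : ∀ v, Fin (kV v)) (eL : ∀ l, Fin (kL l)) =>
                    (∏ v, μV v (eV v)) * (∏ l, μL l (eL l)) *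
                    (if (∀ v, xv v = fV v (xv, xi, xl) (eV v)) ∧
                        (∀ l, xl l = fL l (xv, xi, xl) (eL l)) then (1:ℝ) else 0))
                  (fun (eI : ∀ i, Fin (kI i)) => (∏ i, μI i (eI i)) *
                    (if (∀ i, xi i = g i (eI i)) then (1:ℝ) else 0))]
            _ = ∑ xl : ∀ l, Fin (cL l), ∑ eV : ∀ v, Fin (kV v), ∑ eI : ∀ i, Fin (kI i),
                  ∑ eL : ∀ l, Fin (kL l),
                  (∏ v, μV v (eV v)) * (∏ i, μI i (eI i)) * (∏ l, μL l (eL l)) *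
                  (if (∀ v, xv v = fV v (xv, xi, xl) (eV v)) ∧
                      (∀ i, xi i = fI i (xv, xi, xl) (eI i)) ∧
                      (∀ l, xl l = fL l (xv, xi, xl) (eL l)) then (1:ℝ) else 0) := by
                refine Finset.sum_congr rfl fun xl _ => Finset.sum_congr rfl fun eV _ =>
                  Finset.sum_congr rfl fun eI _ => Finset.sum_congr rfl fun eL _ => ?_
                by_cases h1 : ∀ v, xv v = fV v (xv, xi, xl) (eV v) <;>
                  by_cases h2 : ∀ i, xi i = g i (eI i) <;>
                  by_cases h3 : ∀ l, xl l = fL l (xv, xi, xl) (eL l) <;>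
                  simp [hgI, h1, h2, h3] <;> ring
            _ = P xv xi * ∏ i, Q0 i (xi i) := heq xv xi
        have hTsum : ∀ xi : ∀ i, valI i, ∑ xv, T xv xi = 1 := fun xi =>
          sub_total_one' hneV E hacyc hcL μV μL fV fL hμV1 hμL1 hfV hfL xi
        have hwc : ∀ xi : ∀ i, valI i, w xi = ∏ i, Q0 i (xi i) := by
          intro xi
          have h1 : ∑ xv, T xv xi * w xi = ∑ xv, P xv xi * ∏ i, Q0 i (xi i) :=
            Finset.sum_congr rfl fun xv _ => hsplit xv xi
          rw [← Finset.sum_mul, ← Finset.sum_mul, hTsum xi, hS xi, one_mul, one_mul] at h1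
          exact h1
        have hc0 : ∀ xi : ∀ i, valI i, (0:ℝ) < ∏ i, Q0 i (xi i) :=
          fun xi => Finset.prod_pos fun i _ => hQ0pos i (xi i)
        have hTP : ∀ xv xi, T xv xi = P xv xi := by
          intro xv xi
          have h1 := hsplit xv xi
          rw [hwc xi] at h1
          exact mul_right_cancel₀ (ne_of_gt (hc0 xi)) h1
        exact ⟨cL, kV, kL, μV, μL, fV, fL, hμV0, hμV1, hμL0, hμL1, hfV, hfL,
          fun xv xi => hTP xv xi⟩
end
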